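/- arXiv:1610.01290 — 3 statements merged into one kernel-verified Lean document; each statement's English description precedes it below -/
import Mathlib

section
/- Under assumptions A1 and A2, there exist C > 0 and ρ ∈ (0,1), depending only on m, L, κ and r, such that for all n and all j ≥ 1, the β-mixing coefficient satisfies β_n(j) ≤ C ρ^{[j/m]}, where [x] denotes the integer part of x. -/
open MeasureTheory ProbabilityTheory Filter Set
open scoped ENNReal NNReal

noncomputable section

variable {E : Type*} [MeasurableSpace E]

/-- Total variation distance between two measures. -/
noncomputable def tvDist (μ ν : Measure E) : ℝ :=
  ⨆ A : {A : Set E // MeasurableSet A}, |(μ A).toReal - (ν A).toReal|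

/-- `m`-step kernel obtained by iterating `Q`. -/
noncomputable def mstep (Q : E → Measure E) : ℕ → E → Measure E
  | 0 => fun x => Measure.dirac x
  | (m+1) => fun x => (Q x).bind (mstep Q m)

/-- The time-inhomogeneous `j`-step kernel of the `n`-th row of the array:
`tvstep Q n i j x = δ_x Q_{(i+1)/n} ⋯ Q_{(i+j)/n}`. -/
noncomputable def tvstep (Q : ℝ → E → Measure E) (n : ℕ) : ℤ → ℕ → E → Measure E
  | _, 0, x => Measure.dirac x
  | i, (j+1), x => (Q (((i:ℝ)+1)/(n:ℝ)) x).bind (tvstep Q n (i+1) j)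

/-- The β-mixing coefficient of the `n`-th row of the Markov triangular array:
since the conditional law of `X_{n,i+j}` given `F^{(n)}_i` is
`δ_{X_{n,i}} Q_{(i+1)/n}⋯Q_{(i+j)/n}`, and
`sup_{‖f‖_∞ ≤ 1} |E[f|F] − E f| = 2 ‖·‖_TV`, we have
`β_n(j) = sup_i E[ ‖δ_{X_{n,i}} Q_{(i+1)/n}⋯Q_{(i+j)/n} − π^{(n)}_{i+j}‖_TV ]`
(the terms with `i + j > n` vanish since `X_{n,l} = 0` for `l > n`). -/
noncomputable def betaMix (Q : ℝ → E → Measure E) (πn : ℕ → ℤ → Measure E)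
    (n : ℕ) (j : ℕ) : ℝ :=
  ⨆ i : {i : ℤ // i + j ≤ (n:ℤ)},
    ∫ x, tvDist (tvstep Q n i j x) (πn n (i + j)) ∂(πn n i)

/-! Dobrushin's inequality `‖μK - νK‖ ≤ (sup_{x,y} ‖K x - K y‖) ‖μ - ν‖` reduces the claim to a
contraction estimate over blocks of `m` steps. On the block of steps `i + 1, …, i + m` every kernel
`Q_{(i+l+1)/n}` is within `L (m/n)^κ` of the frozen kernel `Q_v`, `v = (i+m)/n`, so by A1 the block
contracts by `r + 2 m L (m/n)^κ ≤ (1 + r)/2` as soon as `n ≥ N`. Before time `0` the chain is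
homogeneous with kernel `Q_0`, so for `n < N` only the fewer than `N + m` blocks meeting `(0, n]`
may fail to contract; they are absorbed into `C = ρ^{-(N+m)}`. Finally `β_n(j)` averages
`‖δ_x P - π P‖ ≤ sup_{x,y} ‖δ_x P - δ_y P‖` over `x`, where `P` is the `j`-step kernel. -/

lemma abs_toReal_sub_le_one (μ ν : Measure E) [IsProbabilityMeasure μ] [IsProbabilityMeasure ν]
    (A : Set E) : |(μ A).toReal - (ν A).toReal| ≤ 1 := by
  have hμ : (μ A).toReal ≤ 1 := by rw [← measureReal_def]; exact measureReal_le_one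
  have hν : (ν A).toReal ≤ 1 := by rw [← measureReal_def]; exact measureReal_le_one
  rw [abs_le]
  constructor <;> linarith [ENNReal.toReal_nonneg (a := μ A), ENNReal.toReal_nonneg (a := ν A)]

lemma abs_toReal_sub_le_tvDist (μ ν : Measure E) [IsProbabilityMeasure μ]
    [IsProbabilityMeasure ν] {A : Set E} (hA : MeasurableSet A) :
    |(μ A).toReal - (ν A).toReal| ≤ tvDist μ ν :=
  le_ciSup (f := fun A : {A : Set E // MeasurableSet A} => |(μ A).toReal - (ν A).toReal|)
    ⟨1, by rintro _ ⟨A, rfl⟩; exact abs_toReal_sub_le_one μ ν A⟩ ⟨A, hA⟩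

lemma tvDist_nonneg (μ ν : Measure E) : 0 ≤ tvDist μ ν :=
  Real.iSup_nonneg fun _ => abs_nonneg _

lemma tvDist_le_of_forall {μ ν : Measure E} {c : ℝ}
    (h : ∀ A, MeasurableSet A → |(μ A).toReal - (ν A).toReal| ≤ c) : tvDist μ ν ≤ c := by
  have : Nonempty {A : Set E // MeasurableSet A} := ⟨⟨∅, .empty⟩⟩
  exact ciSup_le fun A => h A A.2

lemma tvDist_le_one (μ ν : Measure E) [IsProbabilityMeasure μ] [IsProbabilityMeasure ν] :
    tvDist μ ν ≤ 1 :=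
  tvDist_le_of_forall fun A _ => abs_toReal_sub_le_one μ ν A

lemma tvDist_comm (μ ν : Measure E) : tvDist μ ν = tvDist ν μ :=
  iSup_congr fun _ => abs_sub_comm _ _

lemma tvDist_self (μ : Measure E) : tvDist μ μ = 0 := by
  simp [tvDist]

lemma tvDist_triangle (μ ν ξ : Measure E) [IsProbabilityMeasure μ] [IsProbabilityMeasure ν]
    [IsProbabilityMeasure ξ] : tvDist μ ξ ≤ tvDist μ ν + tvDist ν ξ :=
  tvDist_le_of_forall fun _ hA => (abs_sub_le _ _ _).trans
    (add_le_add (abs_toReal_sub_le_tvDist μ ν hA) (abs_toReal_sub_le_tvDist ν ξ hA))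

/-- The Hahn set `s` of `μ - ν` carries the whole excess of `μ` over `ν`, so integrating
`g ∈ [0, r]` gains at most `r (μ s - ν s)` on `s` and nothing on `sᶜ`. -/
lemma integral_sub_integral_le_mul_tvDist (μ ν : Measure E) [IsProbabilityMeasure μ]
    [IsProbabilityMeasure ν] {g : E → ℝ} (hg : Measurable g) {r : ℝ}
    (hg0 : ∀ x, 0 ≤ g x) (hgr : ∀ x, g x ≤ r) :
    ∫ x, g x ∂μ - ∫ x, g x ∂ν ≤ r * tvDist μ ν := by
  obtain ⟨s, hs, hνμ, hμν⟩ := hahn_decomposition μ ν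
  have hint : ∀ (ξ : Measure E) [IsFiniteMeasure ξ], Integrable g ξ := fun ξ _ =>
    .of_bound hg.aestronglyMeasurable r
      (ae_of_all _ fun x => by rw [Real.norm_of_nonneg (hg0 x)]; exact hgr x)
  have hle_s : ν.restrict s ≤ μ.restrict s := Measure.le_iff.2 fun t ht => by
    simp only [Measure.restrict_apply ht]
    exact hνμ _ (ht.inter hs) inter_subset_right
  have hle_sc : μ.restrict sᶜ ≤ ν.restrict sᶜ := Measure.le_iff.2 fun t ht => by
    simp only [Measure.restrict_apply ht]
    exact hμν _ (ht.inter hs.compl) inter_subset_right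
  have on_s : ∫ x in s, g x ∂μ - ∫ x in s, g x ∂ν ≤ r * ((μ s).toReal - (ν s).toReal) := by
    have h := integral_mono_measure hle_s (ae_of_all _ fun x => sub_nonneg.2 (hgr x))
      ((integrable_const r).sub (hint _))
    rw [integral_sub (integrable_const r) (hint _), integral_sub (integrable_const r) (hint _)]
      at h
    simp only [integral_const, smul_eq_mul, measureReal_def, Measure.restrict_apply_univ] at h
    linarith
  have on_sc : ∫ x in sᶜ, g x ∂μ ≤ ∫ x in sᶜ, g x ∂ν :=
    integral_mono_measure hle_sc (ae_of_all _ hg0) (hint _)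
  have htv : r * ((μ s).toReal - (ν s).toReal) ≤ r * tvDist μ ν :=
    mul_le_mul_of_nonneg_left ((le_abs_self _).trans (abs_toReal_sub_le_tvDist μ ν hs))
      ((hg0 (nonempty_of_isProbabilityMeasure μ).some).trans (hgr _))
  rw [← integral_add_compl hs (hint μ), ← integral_add_compl hs (hint ν)]
  linarith

lemma integral_sub_integral_le_mul_tvDist_of_osc (μ ν : Measure E) [IsProbabilityMeasure μ]
    [IsProbabilityMeasure ν] {f : E → ℝ} (hf : Measurable f) (hf0 : ∀ x, 0 ≤ f x) {r : ℝ}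
    (hosc : ∀ x y, f x - f y ≤ r) :
    ∫ x, f x ∂μ - ∫ x, f x ∂ν ≤ r * tvDist μ ν := by
  have : Nonempty E := nonempty_of_isProbabilityMeasure μ
  set c := ⨅ y, f y
  have hc : ∀ x, c ≤ f x := ciInf_le ⟨0, by rintro _ ⟨y, rfl⟩; exact hf0 y⟩
  have hcr : ∀ x, f x - c ≤ r := fun x => sub_le_comm.1 (le_ciInf fun y => sub_le_comm.1 (hosc x y))
  have h := integral_sub_integral_le_mul_tvDist μ ν (g := fun x => f x - c) (hf.sub_const c)
    (fun x => sub_nonneg.2 (hc x)) hcr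
  have hbdd : ∀ (ξ : Measure E) [IsProbabilityMeasure ξ], Integrable f ξ := fun ξ _ =>
    .of_bound hf.aestronglyMeasurable (c + r)
      (ae_of_all _ fun x => by rw [Real.norm_of_nonneg (hf0 x)]; linarith [hcr x])
  simpa [integral_sub (hbdd μ) (integrable_const c), integral_sub (hbdd ν) (integrable_const c)]
    using h

lemma toReal_bind_apply (μ : Measure E) {K : E → Measure E} (hK : Measurable K)
    (hKp : ∀ x, IsProbabilityMeasure (K x)) {A : Set E} (hA : MeasurableSet A) :
    ((μ.bind K) A).toReal = ∫ x, (K x A).toReal ∂μ := by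
  have hm : Measurable fun x => K x A := (Measure.measurable_coe hA).comp hK
  rw [Measure.bind_apply hA hK.aemeasurable,
    integral_toReal hm.aemeasurable (ae_of_all _ fun x => measure_lt_top _ _)]

lemma integrable_toReal_apply (μ : Measure E) [IsFiniteMeasure μ] {K : E → Measure E}
    (hK : Measurable K) (hKp : ∀ x, IsProbabilityMeasure (K x)) {A : Set E}
    (hA : MeasurableSet A) : Integrable (fun x => (K x A).toReal) μ :=
  .of_bound ((Measure.measurable_coe hA).comp hK).ennreal_toReal.aestronglyMeasurable 1
    (ae_of_all _ fun x => by
      rw [Real.norm_of_nonneg ENNReal.toReal_nonneg, ← measureReal_def]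
      exact measureReal_le_one)

lemma tvDist_bind_le_mul (μ ν : Measure E) [IsProbabilityMeasure μ] [IsProbabilityMeasure ν]
    {K : E → Measure E} (hK : Measurable K) (hKp : ∀ x, IsProbabilityMeasure (K x)) {r : ℝ}
    (hosc : ∀ x y, tvDist (K x) (K y) ≤ r) :
    tvDist (μ.bind K) (ν.bind K) ≤ r * tvDist μ ν := by
  refine tvDist_le_of_forall fun A hA => ?_
  rw [toReal_bind_apply μ hK hKp hA, toReal_bind_apply ν hK hKp hA]
  have hosc_A : ∀ x y, (K x A).toReal - (K y A).toReal ≤ r := fun x y =>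
    (le_abs_self _).trans ((abs_toReal_sub_le_tvDist _ _ hA).trans (hosc x y))
  have hf : Measurable fun x => (K x A).toReal :=
    ((Measure.measurable_coe hA).comp hK).ennreal_toReal
  rw [abs_sub_le_iff]
  constructor
  · exact integral_sub_integral_le_mul_tvDist_of_osc μ ν hf (fun _ => ENNReal.toReal_nonneg) hosc_A
  · rw [tvDist_comm]
    exact integral_sub_integral_le_mul_tvDist_of_osc ν μ hf (fun _ => ENNReal.toReal_nonneg) hosc_A

lemma tvDist_bind_le (μ ν : Measure E) [IsProbabilityMeasure μ] [IsProbabilityMeasure ν]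
    {K : E → Measure E} (hK : Measurable K) (hKp : ∀ x, IsProbabilityMeasure (K x)) :
    tvDist (μ.bind K) (ν.bind K) ≤ tvDist μ ν := by
  simpa using tvDist_bind_le_mul μ ν hK hKp fun x y => tvDist_le_one (K x) (K y)

lemma tvDist_bind_bind_le_of_forall (μ : Measure E) [IsProbabilityMeasure μ]
    {K K' : E → Measure E} (hK : Measurable K) (hK' : Measurable K')
    (hKp : ∀ x, IsProbabilityMeasure (K x)) (hK'p : ∀ x, IsProbabilityMeasure (K' x))
    {c : ℝ} (h : ∀ x, tvDist (K x) (K' x) ≤ c) :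
    tvDist (μ.bind K) (μ.bind K') ≤ c := by
  refine tvDist_le_of_forall fun A hA => ?_
  rw [toReal_bind_apply μ hK hKp hA, toReal_bind_apply μ hK' hK'p hA,
    ← integral_sub (integrable_toReal_apply μ hK hKp hA) (integrable_toReal_apply μ hK' hK'p hA)]
  simpa using norm_integral_le_of_norm_le_const (μ := μ)
    (f := fun x => (K x A).toReal - (K' x A).toReal)
    (ae_of_all μ fun x => (abs_toReal_sub_le_tvDist (K x) (K' x) hA).trans (h x))

lemma tvDist_le_bind_of_forall (ν₀ μ : Measure E) [IsProbabilityMeasure ν₀]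
    [IsProbabilityMeasure μ] {K : E → Measure E} (hK : Measurable K)
    (hKp : ∀ x, IsProbabilityMeasure (K x)) {c : ℝ} (h : ∀ y, tvDist ν₀ (K y) ≤ c) :
    tvDist ν₀ (μ.bind K) ≤ c := by
  have hν₀ : μ.bind (fun _ => ν₀) = ν₀ := by simp [Measure.bind_const]
  rw [← hν₀]
  exact tvDist_bind_bind_le_of_forall μ measurable_const hK (fun _ => ‹_›) hKp h

section MarkovChain

variable {Q : ℝ → E → Measure E} {n : ℕ}

lemma measurable_mstep {R : E → Measure E} (hR : Measurable R) : ∀ k, Measurable (mstep R k)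
  | 0 => Measure.measurable_dirac
  | k + 1 => (Measure.measurable_bind' (measurable_mstep hR k)).comp hR

lemma isProbabilityMeasure_mstep {R : E → Measure E} (hR : Measurable R)
    (hRp : ∀ x, IsProbabilityMeasure (R x)) : ∀ k x, IsProbabilityMeasure (mstep R k x)
  | 0, x => by rw [mstep]; infer_instance
  | k + 1, x => isProbabilityMeasure_bind (measurable_mstep hR k).aemeasurable
      (ae_of_all _ (isProbabilityMeasure_mstep hR hRp k))

lemma measurable_tvstep (hQmeas : ∀ u, Measurable (Q u)) :
    ∀ j i, Measurable (tvstep Q n i j)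
  | 0, _ => Measure.measurable_dirac
  | j + 1, i => (Measure.measurable_bind' (measurable_tvstep hQmeas j (i + 1))).comp (hQmeas _)

lemma isProbabilityMeasure_tvstep (hQmeas : ∀ u, Measurable (Q u))
    (hQprob : ∀ u x, IsProbabilityMeasure (Q u x)) :
    ∀ j i x, IsProbabilityMeasure (tvstep Q n i j x)
  | 0, i, x => by rw [tvstep]; infer_instance
  | j + 1, i, x => isProbabilityMeasure_bind (measurable_tvstep hQmeas j (i + 1)).aemeasurable
      (ae_of_all _ (isProbabilityMeasure_tvstep hQmeas hQprob j (i + 1)))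

lemma tvstep_add (hQmeas : ∀ u, Measurable (Q u)) :
    ∀ a b i x, tvstep Q n i (a + b) x = (tvstep Q n i a x).bind (tvstep Q n (i + a) b)
  | 0, b, i, x => by
    rw [Nat.zero_add, tvstep, Measure.dirac_bind (measurable_tvstep hQmeas b _), Nat.cast_zero,
      add_zero]
  | a + 1, b, i, x => by
    have hsplit : ∀ y, tvstep Q n (i + 1) (a + b) y
        = (tvstep Q n (i + 1) a y).bind (tvstep Q n (i + 1 + a) b) :=
      tvstep_add hQmeas a b (i + 1)
    rw [Nat.add_right_comm, tvstep, tvstep, funext hsplit, Measure.bind_bind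
      (measurable_tvstep hQmeas a _).aemeasurable (measurable_tvstep hQmeas b _).aemeasurable]
    push_cast
    ring_nf

lemma tvstep_succ (hQmeas : ∀ u, Measurable (Q u)) (j : ℕ) (i : ℤ) (x : E) :
    tvstep Q n i (j + 1) x = (tvstep Q n i j x).bind (Q ((i + j + 1) / n)) := by
  rw [tvstep_add hQmeas]
  congr 1
  funext y
  have hzero : tvstep Q n (i + j + 1) 0 = Measure.dirac := rfl
  rw [tvstep, hzero, Measure.bind_dirac]
  push_cast
  ring_nf

lemma bind_tvstep_eq (hQmeas : ∀ u, Measurable (Q u)) {π : ℤ → Measure E}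
    (hrec : ∀ k : ℤ, k ≤ n → π k = (π (k - 1)).bind (Q (k / n))) :
    ∀ (j : ℕ) (i : ℤ), i + j ≤ n → (π i).bind (tvstep Q n i j) = π (i + j)
  | 0, i, _ => by simp [tvstep]
  | j + 1, i, h => by
    rw [Nat.cast_succ, ← add_assoc, hrec (i + j + 1) (by push_cast at h; linarith),
      add_sub_cancel_right,
      ← bind_tvstep_eq hQmeas hrec j i (by push_cast at h; linarith),
      Measure.bind_bind (measurable_tvstep hQmeas j i).aemeasurable (hQmeas _).aemeasurable]
    congr 1
    funext y
    rw [tvstep_succ hQmeas]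
    push_cast
    ring_nf

end MarkovChain

section BlockContraction

variable {Q : ℝ → E → Measure E} {n : ℕ}

lemma tvDist_tvstep_mstep_le (hQmeas : ∀ u, Measurable (Q u))
    (hQprob : ∀ u x, IsProbabilityMeasure (Q u x)) {v c : ℝ} :
    ∀ (k : ℕ) (i : ℤ), (∀ l : ℕ, l < k → ∀ z, tvDist (Q ((i + l + 1) / n) z) (Q v z) ≤ c) →
      ∀ x, tvDist (tvstep Q n i k x) (mstep (Q v) k x) ≤ k * c
  | 0, i, _, x => by simp [tvstep, mstep, tvDist_self]
  | k + 1, i, hc, x => by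
    have hT := isProbabilityMeasure_tvstep (n := n) hQmeas hQprob k (i + 1)
    have hM := isProbabilityMeasure_mstep (hQmeas v) (hQprob v) k
    have := isProbabilityMeasure_bind (m := Q ((i + 1) / n) x)
      (measurable_tvstep hQmeas k (i + 1)).aemeasurable (ae_of_all _ hT)
    have := isProbabilityMeasure_bind (m := Q ((i + 1) / n) x)
      (measurable_mstep (hQmeas v) k).aemeasurable (ae_of_all _ hM)
    have := isProbabilityMeasure_bind (m := Q v x)
      (measurable_mstep (hQmeas v) k).aemeasurable (ae_of_all _ hM)
    have hc_tail : ∀ l : ℕ, l < k → ∀ z, tvDist (Q ((↑(i + 1) + l + 1) / n) z) (Q v z) ≤ c :=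
      fun l hl z => by simpa [add_assoc, add_comm, add_left_comm] using hc (l + 1) (by omega) z
    have hc_head : tvDist (Q ((i + 1) / n) x) (Q v x) ≤ c := by simpa using hc 0 (by omega) x
    have tail := tvDist_bind_bind_le_of_forall (Q ((i + 1) / n) x)
      (measurable_tvstep hQmeas k (i + 1)) (measurable_mstep (hQmeas v) k) hT hM
      (tvDist_tvstep_mstep_le hQmeas hQprob k (i + 1) hc_tail)
    have head := tvDist_bind_le (Q ((i + 1) / n) x) (Q v x) (measurable_mstep (hQmeas v) k) hM
    rw [tvstep, mstep]
    push_cast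
    linarith [tvDist_triangle ((Q ((i + 1) / n) x).bind (tvstep Q n (i + 1) k))
      ((Q ((i + 1) / n) x).bind (mstep (Q v) k)) ((Q v x).bind (mstep (Q v) k))]

lemma tvDist_tvstep_le_of_forall_tvDist_le (hQmeas : ∀ u, Measurable (Q u))
    (hQprob : ∀ u x, IsProbabilityMeasure (Q u x)) {m : ℕ} {v r c : ℝ}
    (hv : ∀ x y, tvDist (mstep (Q v) m x) (mstep (Q v) m y) ≤ r) {i : ℤ}
    (hc : ∀ l : ℕ, l < m → ∀ z, tvDist (Q ((i + l + 1) / n) z) (Q v z) ≤ c) (x y : E) :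
    tvDist (tvstep Q n i m x) (tvstep Q n i m y) ≤ r + 2 * m * c := by
  have := isProbabilityMeasure_tvstep (n := n) hQmeas hQprob m i
  have := isProbabilityMeasure_mstep (hQmeas v) (hQprob v) m
  have hx := tvDist_tvstep_mstep_le hQmeas hQprob m i hc x
  have hy := tvDist_tvstep_mstep_le hQmeas hQprob m i hc y
  rw [tvDist_comm] at hy
  linarith [tvDist_triangle (tvstep Q n i m x) (mstep (Q v) m x) (tvstep Q n i m y),
    tvDist_triangle (mstep (Q v) m x) (mstep (Q v) m y) (tvstep Q n i m y), hv x y]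

/-- Clamping the parameters at `0` brings them into `[0, 1]`, where A2 applies, without changing
the kernels (`Q u = Q 0` for `u ≤ 0`) or increasing their distances. -/
lemma tvDist_Q_le_of_holder (hQ0 : ∀ u ≤ (0:ℝ), Q u = Q 0) {L κ : ℝ} (hL : 0 ≤ L) (hκ : 0 ≤ κ)
    (hA2 : ∀ u ∈ Icc (0:ℝ) 1, ∀ v ∈ Icc (0:ℝ) 1, ∀ x : E,
      tvDist (Q u x) (Q v x) ≤ L * |u - v| ^ κ)
    (hn : 0 < n) {m : ℕ} {i : ℤ} (hin : i + m ≤ n) (l : ℕ) (hl : l < m) (z : E) :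
    tvDist (Q ((i + l + 1) / n) z) (Q (max ((i + m) / n) 0) z) ≤ L * (m / n) ^ κ := by
  have hn' : (0 : ℝ) < n := Nat.cast_pos.2 hn
  have hQmax : ∀ u, Q u = Q (max u 0) := fun u => by
    rcases le_total u 0 with h | h
    · rw [hQ0 u h, max_eq_right h]
    · rw [max_eq_left h]
  have hmem : ∀ k : ℤ, k ≤ n → max ((k : ℝ) / n) 0 ∈ Icc (0:ℝ) 1 := fun k hk =>
    ⟨le_max_right _ _, max_le ((div_le_one hn').2 (by exact_mod_cast hk)) zero_le_one⟩
  have hdist : |max (((i + l + 1 : ℤ) : ℝ) / n) 0 - max (((i + m : ℤ) : ℝ) / n) 0| ≤ m / n := by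
    refine (abs_max_sub_max_le_abs _ _ _).trans ?_
    rw [← sub_div, abs_div, abs_of_pos hn']
    gcongr
    push_cast
    rw [abs_le]
    have hl' : (l : ℝ) + 1 ≤ m := by exact_mod_cast hl
    constructor <;> linarith [(Nat.cast_nonneg (α := ℝ) l)]
  have key := hA2 _ (hmem (i + l + 1) (by omega)) _ (hmem (i + m) hin) z
  push_cast at key hdist
  rw [hQmax ((i + l + 1) / n)]
  exact key.trans (mul_le_mul_of_nonneg_left (Real.rpow_le_rpow (abs_nonneg _) hdist hκ) hL)

lemma tvDist_tvstep_block_le (hQmeas : ∀ u, Measurable (Q u))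
    (hQprob : ∀ u x, IsProbabilityMeasure (Q u x)) (hQ0 : ∀ u ≤ (0:ℝ), Q u = Q 0)
    {m : ℕ} {r : ℝ} (hr : r < 1)
    (hA1 : ∀ u ∈ Icc (0:ℝ) 1, ∀ x y : E, tvDist (mstep (Q u) m x) (mstep (Q u) m y) ≤ r)
    {L κ : ℝ} (hL : 0 ≤ L) (hκ : 0 ≤ κ)
    (hA2 : ∀ u ∈ Icc (0:ℝ) 1, ∀ v ∈ Icc (0:ℝ) 1, ∀ x : E,
      tvDist (Q u x) (Q v x) ≤ L * |u - v| ^ κ)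
    {i : ℤ} (hin : i + m ≤ n) (hsmall : 0 < i + m → 2 * m * (L * (m / n) ^ κ) ≤ (1 - r) / 2)
    (x y : E) :
    tvDist (tvstep Q n i m x) (tvstep Q n i m y) ≤ (1 + r) / 2 := by
  rcases le_or_gt (i + m) 0 with hneg | hpos
  · have hc : ∀ l : ℕ, l < m → ∀ z, tvDist (Q ((i + l + 1) / n) z) (Q 0 z) ≤ 0 :=
      fun l hl z => by
        have hnum : (i : ℝ) + l + 1 ≤ 0 := by exact_mod_cast (by omega : i + l + 1 ≤ 0)
        rw [hQ0 _ (div_nonpos_of_nonpos_of_nonneg hnum n.cast_nonneg), tvDist_self]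
    have := tvDist_tvstep_le_of_forall_tvDist_le hQmeas hQprob
      (hA1 0 ⟨le_rfl, zero_le_one⟩) hc x y
    linarith
  · have hn : 0 < n := by omega
    have hv : max (((i + m : ℤ) : ℝ) / n) 0 ∈ Icc (0:ℝ) 1 :=
      ⟨le_max_right _ _, max_le ((div_le_one (Nat.cast_pos.2 hn)).2 (by exact_mod_cast hin))
        zero_le_one⟩
    push_cast at hv
    have := tvDist_tvstep_le_of_forall_tvDist_le hQmeas hQprob (hA1 _ hv)
      (tvDist_Q_le_of_holder hQ0 hL hκ hA2 hn hin) x y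
    linarith [hsmall hpos]

/-- A block is a contraction except when it lies in `(0, n]` with `n < N`; there are
fewer than `N + m` such blocks, which the constant `(ρ ^ (N + m))⁻¹` absorbs. -/
lemma tvDist_tvstep_mul_le (hQmeas : ∀ u, Measurable (Q u))
    (hQprob : ∀ u x, IsProbabilityMeasure (Q u x)) {m N : ℕ} (hm : 1 ≤ m) {ρ : ℝ}
    (hρ0 : 0 < ρ) (hρ1 : ρ ≤ 1)
    (hblock : ∀ i : ℤ, i + m ≤ n → (0 < i + m → N ≤ n) →
      ∀ x y, tvDist (tvstep Q n i m x) (tvstep Q n i m y) ≤ ρ) :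
    ∀ (q : ℕ) (i : ℤ), i + q * m ≤ n → ∀ x y,
      tvDist (tvstep Q n i (q * m) x) (tvstep Q n i (q * m) y) ≤ (ρ ^ (N + m))⁻¹ * ρ ^ q := by
  have hC : ∀ q, q ≤ N + m → 1 ≤ (ρ ^ (N + m))⁻¹ * ρ ^ q := fun q hq => by
    rw [inv_mul_eq_div, one_le_div (by positivity)]
    exact pow_le_pow_of_le_one hρ0.le hρ1 hq
  have hprob := isProbabilityMeasure_tvstep (n := n) hQmeas hQprob
  intro q
  induction q with
  | zero => exact fun i _ x y => (tvDist_le_one _ _).trans (hC 0 (Nat.zero_le _))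
  | succ q ih =>
    intro i hin x y
    have hqm : (0 : ℤ) ≤ q * m := by positivity
    push_cast at hin
    by_cases hgood : 0 < i + m → N ≤ n
    · rw [Nat.succ_mul, add_comm, tvstep_add hQmeas m (q * m) i x, tvstep_add hQmeas m (q * m) i y]
      calc _ ≤ (ρ ^ (N + m))⁻¹ * ρ ^ q * tvDist (tvstep Q n i m x) (tvstep Q n i m y) :=
            tvDist_bind_le_mul _ _ (measurable_tvstep hQmeas _ _) (hprob _ _)
              (ih (i + m) (by linarith))
        _ ≤ (ρ ^ (N + m))⁻¹ * ρ ^ q * ρ := by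
            gcongr
            exact hblock i (by linarith) hgood x y
        _ = (ρ ^ (N + m))⁻¹ * ρ ^ (q + 1) := by ring
    · push Not at hgood
      have hq : ((q + 1 : ℕ) : ℤ) ≤ N + m := by
        have : (q + 1 : ℤ) ≤ (q + 1) * m :=
          le_mul_of_one_le_right (by positivity) (by exact_mod_cast hm)
        have : (n : ℤ) < N := by exact_mod_cast hgood.2
        push_cast
        linarith [hgood.1]
      exact (tvDist_le_one _ _).trans (hC _ (by exact_mod_cast hq))

lemma tvDist_tvstep_add_le (hQmeas : ∀ u, Measurable (Q u))
    (hQprob : ∀ u x, IsProbabilityMeasure (Q u x)) (k l : ℕ) (i : ℤ) (x y : E) :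
    tvDist (tvstep Q n i (k + l) x) (tvstep Q n i (k + l) y)
      ≤ tvDist (tvstep Q n i k x) (tvstep Q n i k y) := by
  have hprob := isProbabilityMeasure_tvstep (n := n) hQmeas hQprob
  rw [tvstep_add hQmeas k l i x, tvstep_add hQmeas k l i y]
  exact tvDist_bind_le _ _ (measurable_tvstep hQmeas _ _) (hprob _ _)

end BlockContraction

lemma betaMix_le_of_forall_tvDist_le {Q : ℝ → E → Measure E} (hQmeas : ∀ u, Measurable (Q u))
    (hQprob : ∀ u x, IsProbabilityMeasure (Q u x)) {πn : ℕ → ℤ → Measure E}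
    (hπprob : ∀ n k, IsProbabilityMeasure (πn n k)) {n : ℕ}
    (hrec : ∀ k : ℤ, k ≤ n → πn n k = (πn n (k - 1)).bind (Q (k / n))) {j : ℕ} {c : ℝ}
    (hc : 0 ≤ c)
    (h : ∀ i : ℤ, i + j ≤ n → ∀ x y, tvDist (tvstep Q n i j x) (tvstep Q n i j y) ≤ c) :
    betaMix Q πn n j ≤ c := by
  refine Real.iSup_le (fun ⟨i, hij⟩ => ?_) hc
  have hprob := isProbabilityMeasure_tvstep (n := n) hQmeas hQprob j i
  have hpoint : ∀ x, tvDist (tvstep Q n i j x) (πn n (i + j)) ≤ c := fun x => by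
    rw [← bind_tvstep_eq hQmeas hrec j i hij]
    exact tvDist_le_bind_of_forall _ _ (measurable_tvstep hQmeas j i) hprob (h i hij x)
  simpa using (le_abs_self _).trans (norm_integral_le_of_norm_le_const (μ := πn n i)
    (f := fun x => tvDist (tvstep Q n i j x) (πn n (i + j)))
    (ae_of_all _ fun x => by rw [Real.norm_of_nonneg (tvDist_nonneg _ _)]; exact hpoint x))

lemma eventually_mul_div_rpow_le (a b : ℝ) {κ ε : ℝ} (hκ : 0 < κ) (hε : 0 < ε) :
    ∀ᶠ n : ℕ in atTop, a * (b / n) ^ κ ≤ ε := by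
  have h := ((tendsto_const_div_atTop_nhds_zero_nat b).rpow_const_nhds_zero hκ).const_mul a
  rw [mul_zero] at h
  exact h.eventually (eventually_le_nhds hε)

theorem statement1_general
    {E : Type*} [MeasurableSpace E]
    (Q : ℝ → E → Measure E)
    (hQmeas : ∀ u, Measurable (Q u))
    (hQprob : ∀ u x, IsProbabilityMeasure (Q u x))
    (hQ0 : ∀ u ≤ (0:ℝ), Q u = Q 0)
    (πn : ℕ → ℤ → Measure E)
    (hπprob : ∀ n k, IsProbabilityMeasure (πn n k))
    (hrec : ∀ (n : ℕ) (k : ℤ), k ≤ (n:ℤ) → πn n k = (πn n (k-1)).bind (Q ((k:ℝ)/(n:ℝ))))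
    -- Assumption A1
    (m : ℕ) (hm : 1 ≤ m) (r : ℝ) (hr : r ∈ Set.Ioo (0:ℝ) 1)
    (hA1 : ∀ u ∈ Icc (0:ℝ) 1, ∀ x y : E,
      tvDist (mstep (Q u) m x) (mstep (Q u) m y) ≤ r)
    -- Assumption A2
    (L : ℝ) (hL : 0 < L) (κ : ℝ) (hκ : κ ∈ Set.Ioo (0:ℝ) 1)
    (hA2 : ∀ u ∈ Icc (0:ℝ) 1, ∀ v ∈ Icc (0:ℝ) 1, ∀ x : E,
      tvDist (Q u x) (Q v x) ≤ L * |u - v| ^ κ) :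
    ∃ C > (0:ℝ), ∃ ρ ∈ Set.Ioo (0:ℝ) 1,
      ∀ (n : ℕ) (j : ℕ), 1 ≤ j → betaMix Q πn n j ≤ C * ρ ^ (j / m) := by
  obtain ⟨N, hN⟩ := eventually_atTop.1 (eventually_mul_div_rpow_le (2 * m * L) m hκ.1
    (by linarith [hr.2] : 0 < (1 - r) / 2))
  have hρ : (1 + r) / 2 ∈ Ioo (0:ℝ) 1 := ⟨by linarith [hr.1], by linarith [hr.2]⟩
  have hC : 0 < (((1 + r) / 2) ^ (N + m))⁻¹ := inv_pos.2 (pow_pos hρ.1 _)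
  refine ⟨_, hC, (1 + r) / 2, hρ, fun n j _ => ?_⟩
  refine betaMix_le_of_forall_tvDist_le hQmeas hQprob hπprob (hrec n)
    (mul_nonneg hC.le (pow_nonneg hρ.1.le _)) fun i hij x y => ?_
  have hqm : j / m * m ≤ j := Nat.div_mul_le_self j m
  have hsplit := tvDist_tvstep_add_le (n := n) hQmeas hQprob (j / m * m) (j - j / m * m) i x y
  rw [Nat.add_sub_of_le hqm] at hsplit
  refine hsplit.trans (tvDist_tvstep_mul_le hQmeas hQprob hm hρ.1 hρ.2.le ?_ (j / m) i ?_ x y)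
  · exact fun i' hin hgood => tvDist_tvstep_block_le hQmeas hQprob hQ0 hr.2 hA1 hL.le hκ.1.le hA2
      hin (fun hpos => by simpa [mul_assoc] using hN n (hgood hpos))
  · have : ((j / m * m : ℕ) : ℤ) ≤ j := Nat.cast_le.2 hqm
    rw [Nat.cast_mul] at this
    linarith

theorem statement1
    {E : Type*} [MeasurableSpace E]
    (Q : ℝ → E → Measure E)
    (hQmeas : ∀ u, Measurable (Q u))
    (hQprob : ∀ u x, IsProbabilityMeasure (Q u x))
    (hQ0 : ∀ u ≤ (0:ℝ), Q u = Q 0)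
    (πn : ℕ → ℤ → Measure E)
    (hπprob : ∀ n k, IsProbabilityMeasure (πn n k))
    (hstart : ∀ n : ℕ, ∀ k ≤ (0:ℤ), πn n k = πn n 0)
    (hrec : ∀ (n : ℕ) (k : ℤ), k ≤ (n:ℤ) → πn n k = (πn n (k-1)).bind (Q ((k:ℝ)/(n:ℝ))))
    -- Assumption A1
    (m : ℕ) (hm : 1 ≤ m) (r : ℝ) (hr : r ∈ Set.Ioo (0:ℝ) 1)
    (hA1 : ∀ u ∈ Icc (0:ℝ) 1, ∀ x y : E,
      tvDist (mstep (Q u) m x) (mstep (Q u) m y) ≤ r)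
    -- Assumption A2
    (L : ℝ) (hL : 0 < L) (κ : ℝ) (hκ : κ ∈ Set.Ioo (0:ℝ) 1)
    (hA2 : ∀ u ∈ Icc (0:ℝ) 1, ∀ v ∈ Icc (0:ℝ) 1, ∀ x : E,
      tvDist (Q u x) (Q v x) ≤ L * |u - v| ^ κ) :
    ∃ C > (0:ℝ), ∃ ρ ∈ Set.Ioo (0:ℝ) 1,
      ∀ (n : ℕ) (j : ℕ), 1 ≤ j → betaMix Q πn n j ≤ C * ρ ^ (j / m) :=
  statement1_general Q hQmeas hQprob hQ0 πn hπprob hrec m hm r hr hA1 L hL κ hκ hA2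

end
end

section
/- Under assumptions F1 and F2, there exist C > 0 and ρ ∈ (0,1) such that for all x ∈ E and all j ≥ 0, sup_{u∈[0,1]} ‖δ_x Q_u^j − π_u‖_V ≤ C V(x) ρ^j, where π_u is the unique invariant probability of Q_u; moreover sup_{u∈[0,1]} π_u V < ∞. -/
/-!
Fix `u` and let `P = Q_u^m`. Taking `u₁ = ⋯ = u_m = u` in F1 gives `P V ≤ λ V + b` and
`P(x, ·) ≥ η ν` on `{V ≤ R}`. Following Hairer and Mattingly, measure a function by its Lipschitz
constant for `d_β(x, y) = 2 + β V x + β V y` (`x ≠ y`): `P` contracts it by a factor `γ < 1`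
depending only on `λ, b, η, R`, because when `V x + V y ≥ R > 2b / (1 - λ)` the drift shrinks
the weight, and otherwise `P(x, ·)` and `P(y, ·)` share the common part `η ν`. A function with
`|f| ≤ V` is `β⁻¹`-Lipschitz, so iterating, and paying `K^r` for the last `r < m` steps, gives
the geometric bound uniformly in `u`. The drift bounds `π_u V` by `b / (1 - λ)`, and since
`Q_u^j(x, ·) → π_u` setwise for every `x`, every invariant probability equals `π_u`.
-/

open MeasureTheory ProbabilityTheory Filter Set
open scoped ENNReal NNReal

noncomputable section

variable {E : Type*} [MeasurableSpace E]

noncomputable def vDist (V : E → ℝ) (μ ν : Measure E) : ℝ :=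
  ⨆ f : {f : E → ℝ // Measurable f ∧ ∀ x, |f x| ≤ V x},
    |(∫ x, f.1 x ∂μ) - ∫ x, f.1 x ∂ν|

noncomputable def seqStep (Q : ℝ → E → Measure E) : List ℝ → E → Measure E
  | [], x => Measure.dirac x
  | (u :: us), x => (Q u x).bind (seqStep Q us)

end

open scoped Topology

variable {E : Type*}

/-- `f` is `c`-Lipschitz for the Hairer–Mattingly distance `d_β(x, y) = 2 + β V x + β V y`
(`x ≠ y`). -/
def IsWeightedLipschitz (V : E → ℝ) (β c : ℝ) (f : E → ℝ) : Prop :=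
  ∀ x y, |f x - f y| ≤ c * (2 + β * V x + β * V y)

namespace IsWeightedLipschitz

variable {V f : E → ℝ} {β c : ℝ}

lemma of_abs_le (hβ : 0 < β) (hf : ∀ x, |f x| ≤ V x) : IsWeightedLipschitz V β β⁻¹ f := by
  intro x y
  have hxy : |f x - f y| ≤ V x + V y := (abs_sub _ _).trans (add_le_add (hf x) (hf y))
  have : β⁻¹ * (2 + β * V x + β * V y) = 2 * β⁻¹ + (V x + V y) := by field_simp; ring
  rw [this]
  linarith [inv_pos.2 hβ]

lemma abs_le (h : IsWeightedLipschitz V β c f) (x₀ x : E) :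
    |f x| ≤ c * β * V x + (|f x₀| + c * (2 + β * V x₀)) := by
  have := h x x₀
  have := abs_sub_abs_le_abs_sub (f x) (f x₀)
  linarith

lemma exists_abs_sub_le [Nonempty E] (h : IsWeightedLipschitz V β c f) :
    ∃ r, ∀ x, |f x - r| ≤ c * (1 + β * V x) := by
  have hsplit x y : f x - f y ≤ c * (1 + β * V x) + c * (1 + β * V y) := by
    linarith [le_abs_self (f x - f y), h x y]
  have hbdd : BddAbove (range fun x => f x - c * (1 + β * V x)) := by
    obtain ⟨x₀⟩ := ‹Nonempty E›
    exact ⟨f x₀ + c * (1 + β * V x₀), by rintro _ ⟨x, rfl⟩; linarith [hsplit x x₀]⟩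
  refine ⟨⨆ x, (f x - c * (1 + β * V x)), fun x => _root_.abs_le.2 ⟨?_, ?_⟩⟩
  · have := ciSup_le fun y => (by linarith [hsplit y x] :
      f y - c * (1 + β * V y) ≤ f x + c * (1 + β * V x))
    linarith
  · linarith [le_ciSup hbdd x]

end IsWeightedLipschitz

variable [MeasurableSpace E]

lemma ProbabilityTheory.Kernel.pow_zero_apply (κ : Kernel E E) (x : E) :
    (κ ^ 0) x = Measure.dirac x := by
  rw [pow_zero]; exact Kernel.id_apply x

lemma mstep_eq_pow (κ : Kernel E E) : ∀ n, mstep κ n = ⇑(κ ^ n)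
  | 0 => by ext1 x; exact (Kernel.pow_zero_apply κ x).symm
  | n + 1 => by
    ext1 x
    rw [pow_succ, mstep, mstep_eq_pow κ n]
    rfl

lemma seqStep_replicate (Q : ℝ → E → Measure E) (u : ℝ) :
    ∀ n, seqStep Q (List.replicate n u) = mstep (Q u) n
  | 0 => rfl
  | n + 1 => by
    ext1 x
    simp only [List.replicate_succ, seqStep, mstep, seqStep_replicate Q u n]

instance isMarkovKernel_pow (κ : Kernel E E) [IsMarkovKernel κ] :
    ∀ n, IsMarkovKernel (κ ^ n)
  | 0 => by rw [pow_zero]; exact inferInstanceAs (IsMarkovKernel Kernel.id)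
  | n + 1 => by
    have := isMarkovKernel_pow κ n
    rw [pow_succ]; exact Kernel.IsMarkovKernel.comp _ _

lemma ProbabilityTheory.Kernel.Invariant.pow {κ : Kernel E E} {μ : Measure E}
    (hμ : κ.Invariant μ) : ∀ n, (κ ^ n).Invariant μ
  | 0 => Measure.bind_dirac
  | n + 1 => by rw [pow_succ]; exact (hμ.pow n).comp hμ

lemma ProbabilityTheory.Kernel.Invariant.integral_integral {κ : Kernel E E} [IsSFiniteKernel κ]
    {μ : Measure E} [SFinite μ] (hμ : κ.Invariant μ) {f : E → ℝ} (hf : Integrable f μ) :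
    ∫ x, ∫ y, f y ∂(κ x) ∂μ = ∫ y, f y ∂μ := by
  have hcomp : (κ ∘ₖ Kernel.const Unit μ) () = μ := by
    rw [← Measure.comp_eq_comp_const_apply]; exact hμ
  have h := Kernel.integral_comp (η := κ) (κ := Kernel.const Unit μ) (a := ()) (hcomp ▸ hf)
  rwa [hcomp, Kernel.const_apply, eq_comm] at h

lemma integrable_of_lintegral_ofReal_le {μ : Measure E} {V : E → ℝ} (hV : Measurable V)
    (hV0 : ∀ x, 0 ≤ V x) {W : ℝ} (h : ∫⁻ x, ENNReal.ofReal (V x) ∂μ ≤ ENNReal.ofReal W) :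
    Integrable V μ :=
  ⟨hV.aestronglyMeasurable, (hasFiniteIntegral_iff_ofReal (.of_forall hV0)).2
    (h.trans_lt ENNReal.ofReal_lt_top)⟩

lemma integral_le_of_lintegral_ofReal_le {μ : Measure E} {V : E → ℝ} (hV : Measurable V)
    (hV0 : ∀ x, 0 ≤ V x) {W : ℝ} (hW : 0 ≤ W)
    (h : ∫⁻ x, ENNReal.ofReal (V x) ∂μ ≤ ENNReal.ofReal W) : ∫ x, V x ∂μ ≤ W := by
  rw [integral_eq_lintegral_of_nonneg_ae (.of_forall hV0) hV.aestronglyMeasurable]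
  exact ENNReal.toReal_le_of_le_ofReal hW h

lemma lintegral_ofReal_mul_add {μ : Measure E} [IsProbabilityMeasure μ] {V : E → ℝ}
    (hV : Measurable V) (hV0 : ∀ x, 0 ≤ V x) {a b : ℝ} (ha : 0 ≤ a) (hb : 0 ≤ b) :
    ∫⁻ x, ENNReal.ofReal (a * V x + b) ∂μ
      = ENNReal.ofReal a * ∫⁻ x, ENNReal.ofReal (V x) ∂μ + ENNReal.ofReal b := by
  simp_rw [ENNReal.ofReal_add (mul_nonneg ha (hV0 _)) hb, ENNReal.ofReal_mul ha]
  rw [lintegral_add_right _ measurable_const, lintegral_const_mul _ hV.ennreal_ofReal,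
    lintegral_const, measure_univ, mul_one]

lemma MeasureTheory.Integrable.of_abs_le_mul_add {μ : Measure E} [IsFiniteMeasure μ] {V f : E → ℝ}
    (hV : Integrable V μ) (hf : Measurable f) {a c : ℝ} (hfV : ∀ x, |f x| ≤ c * V x + a) :
    Integrable f μ :=
  ((hV.const_mul c).add (integrable_const a)).mono' hf.aestronglyMeasurable
    (.of_forall hfV)

lemma integral_add_mul {μ : Measure E} [IsProbabilityMeasure μ] {V : E → ℝ}
    (hV : Integrable V μ) (a b : ℝ) : ∫ x, (a + b * V x) ∂μ = a + b * ∫ x, V x ∂μ := by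
  rw [integral_add (integrable_const a) (hV.const_mul b), integral_const_mul, integral_const,
    probReal_univ, one_smul]

lemma abs_integral_le_of_abs_le {μ : Measure E} {f g : E → ℝ} (hg : Integrable g μ)
    (hfg : ∀ x, |f x| ≤ g x) : |∫ x, f x ∂μ| ≤ ∫ x, g x ∂μ :=
  norm_integral_le_of_norm_le (f := f) hg (.of_forall hfg)

section Drift

variable {V : E → ℝ} {κ : Kernel E E} [IsMarkovKernel κ]

lemma lintegral_pow_le_of_drift (hV : Measurable V) (hV0 : ∀ x, 0 ≤ V x) {a b : ℝ}
    (ha : 0 ≤ a) (hb : 0 ≤ b)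
    (hdrift : ∀ x, ∫⁻ y, ENNReal.ofReal (V y) ∂(κ x) ≤ ENNReal.ofReal (a * V x + b))
    (n : ℕ) (x : E) :
    ∫⁻ y, ENNReal.ofReal (V y) ∂((κ ^ n) x)
      ≤ ENNReal.ofReal (a ^ n * V x + b * ∑ i ∈ Finset.range n, a ^ i) := by
  induction n with
  | zero =>
    rw [Kernel.pow_zero_apply, lintegral_dirac' x hV.ennreal_ofReal]
    simp
  | succ n ih =>
    have hS : 0 ≤ ∑ i ∈ Finset.range n, a ^ i := by positivity
    calc ∫⁻ y, ENNReal.ofReal (V y) ∂((κ ^ (n + 1)) x)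
        = ∫⁻ z, ∫⁻ y, ENNReal.ofReal (V y) ∂(κ z) ∂((κ ^ n) x) := by
          rw [pow_succ', ← Kernel.lintegral_comp _ _ _ hV.ennreal_ofReal]; rfl
      _ ≤ ∫⁻ z, ENNReal.ofReal (a * V z + b) ∂((κ ^ n) x) := lintegral_mono hdrift
      _ = ENNReal.ofReal a * ∫⁻ z, ENNReal.ofReal (V z) ∂((κ ^ n) x) + ENNReal.ofReal b :=
          lintegral_ofReal_mul_add hV hV0 ha hb
      _ ≤ ENNReal.ofReal a * ENNReal.ofReal (a ^ n * V x + b * ∑ i ∈ Finset.range n, a ^ i)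
            + ENNReal.ofReal b := by gcongr
      _ = ENNReal.ofReal (a ^ (n + 1) * V x + b * ∑ i ∈ Finset.range (n + 1), a ^ i) := by
          rw [← ENNReal.ofReal_mul ha, ← ENNReal.ofReal_add (by have := hV0 x; positivity) hb,
            geom_sum_succ]
          ring_nf

lemma lintegral_pow_le_of_le_mul (hV : Measurable V) (hV0 : ∀ x, 0 ≤ V x) {K : ℝ} (hK : 0 ≤ K)
    (hstep : ∀ x, ∫⁻ y, ENNReal.ofReal (V y) ∂(κ x) ≤ ENNReal.ofReal (K * V x))
    (n : ℕ) (x : E) :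
    ∫⁻ y, ENNReal.ofReal (V y) ∂((κ ^ n) x) ≤ ENNReal.ofReal (K ^ n * V x) := by
  simpa using lintegral_pow_le_of_drift hV hV0 hK le_rfl (by simpa using hstep) n x

lemma lintegral_pow_le_of_drift_of_lt_one (hV : Measurable V) (hV0 : ∀ x, 0 ≤ V x)
    {lam b : ℝ} (hlam0 : 0 ≤ lam) (hlam1 : lam < 1) (hb : 0 ≤ b)
    (hdrift : ∀ x, ∫⁻ y, ENNReal.ofReal (V y) ∂(κ x) ≤ ENNReal.ofReal (lam * V x + b))
    (n : ℕ) (x : E) :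
    ∫⁻ y, ENNReal.ofReal (V y) ∂((κ ^ n) x) ≤ ENNReal.ofReal (lam ^ n * V x + b / (1 - lam)) := by
  refine (lintegral_pow_le_of_drift hV hV0 hlam0 hb hdrift n x).trans (ENNReal.ofReal_le_ofReal ?_)
  have hgeom : ∑ i ∈ Finset.range n, lam ^ i ≤ 1 / (1 - lam) := by
    simpa using geom_sum_Ico_le_of_lt_one (m := 0) (n := n) hlam0 hlam1
  have := mul_le_mul_of_nonneg_left hgeom hb
  rw [mul_one_div] at this
  linarith

lemma lintegral_le_of_invariant_of_drift (hV : Measurable V) (hV0 : ∀ x, 0 ≤ V x)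
    {lam b : ℝ} (hlam0 : 0 ≤ lam) (hlam1 : lam < 1) (hb : 0 ≤ b)
    (hdrift : ∀ x, ∫⁻ y, ENNReal.ofReal (V y) ∂(κ x) ≤ ENNReal.ofReal (lam * V x + b))
    {μ : Measure E} [IsProbabilityMeasure μ] (hμ : κ.Invariant μ) :
    ∫⁻ x, ENNReal.ofReal (V x) ∂μ ≤ ENNReal.ofReal (b / (1 - lam)) := by
  set B := b / (1 - lam)
  -- `μ V` may be infinite a priori, so we work with the truncations `V ⊓ N`.
  have htrunc : ∀ N : ℕ, ∫⁻ x, ENNReal.ofReal (V x) ⊓ N ∂μ ≤ ENNReal.ofReal B := by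
    intro N
    have hle : ∀ n, ∫⁻ x, ENNReal.ofReal (V x) ⊓ N ∂μ
        ≤ ∫⁻ x, ENNReal.ofReal (lam ^ n * V x + B) ⊓ N ∂μ := by
      intro n
      conv_lhs => rw [← (hμ.pow n).def]
      rw [Measure.lintegral_bind (Kernel.aemeasurable _) (by fun_prop)]
      refine lintegral_mono fun x => le_inf ?_ ?_
      · exact (lintegral_mono fun _ => inf_le_left).trans
          (lintegral_pow_le_of_drift_of_lt_one hV hV0 hlam0 hlam1 hb hdrift n x)
      · exact (lintegral_mono fun _ => inf_le_right).trans (by simp)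
    have hlim : Tendsto (fun n => ∫⁻ x, ENNReal.ofReal (lam ^ n * V x + B) ⊓ N ∂μ) atTop
        (𝓝 (∫⁻ _, ENNReal.ofReal B ⊓ N ∂μ)) := by
      refine tendsto_lintegral_of_dominated_convergence (μ := μ) (fun _ => N)
        (fun n => ((hV.const_mul _).add_const B).ennreal_ofReal.inf measurable_const)
        (fun n => .of_forall fun x => inf_le_right) (by simp) (.of_forall fun x => ?_)
      refine ((ENNReal.continuous_ofReal.tendsto B).comp ?_).min tendsto_const_nhds
      simpa using ((tendsto_pow_atTop_nhds_zero_of_lt_one hlam0 hlam1).mul_const (V x)).add_const B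
    calc ∫⁻ x, ENNReal.ofReal (V x) ⊓ N ∂μ ≤ ∫⁻ _, ENNReal.ofReal B ⊓ N ∂μ :=
          ge_of_tendsto hlim (.of_forall hle)
      _ ≤ ENNReal.ofReal B := (lintegral_mono fun _ => inf_le_left).trans (by simp)
  calc ∫⁻ x, ENNReal.ofReal (V x) ∂μ = ∫⁻ x, ⨆ N : ℕ, ENNReal.ofReal (V x) ⊓ N ∂μ := by
        simp_rw [← inf_iSup_eq, ENNReal.iSup_natCast, inf_top_eq]
    _ = ⨆ N : ℕ, ∫⁻ x, ENNReal.ofReal (V x) ⊓ N ∂μ :=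
        lintegral_iSup (fun _ => by fun_prop)
          fun _ _ hNM _ => inf_le_inf_left _ (Nat.cast_le.2 hNM)
    _ ≤ ENNReal.ofReal B := iSup_le htrunc

end Drift

lemma abs_integral_sub_smul_integral_le {μ ν : Measure E} [IsFiniteMeasure μ] {η : ℝ}
    (hη : 0 ≤ η) (hle : ENNReal.ofReal η • ν ≤ μ) {f g : E → ℝ} (hf : Measurable f)
    (hg : Integrable g μ) (hfg : ∀ x, |f x| ≤ g x) :
    |∫ x, f x ∂μ - η * ∫ x, f x ∂ν| ≤ ∫ x, g x ∂μ - η * ∫ x, g x ∂ν := by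
  have : IsFiniteMeasure (ENNReal.ofReal η • ν) := isFiniteMeasure_of_le μ hle
  have hsplit : ∀ h : E → ℝ, Integrable h μ →
      ∫ x, h x ∂μ = ∫ x, h x ∂(μ - ENNReal.ofReal η • ν) + η * ∫ x, h x ∂ν := by
    intro h hh
    conv_lhs => rw [← Measure.sub_add_cancel_of_le hle]
    rw [integral_add_measure (hh.mono_measure Measure.sub_le) (hh.mono_measure hle),
      integral_smul_measure, ENNReal.toReal_ofReal hη, smul_eq_mul]
  have hfi : Integrable f μ := hg.mono' hf.aestronglyMeasurable (.of_forall hfg)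
  rw [hsplit f hfi, hsplit g hg, add_sub_cancel_right, add_sub_cancel_right]
  exact abs_integral_le_of_abs_le (hg.mono_measure Measure.sub_le) hfg

def IsWeightedContraction (P : Kernel E E) (V : E → ℝ) (β γ : ℝ) : Prop :=
  ∀ f : E → ℝ, Measurable f → (∀ x, |f x| ≤ 1 + β * V x) →
    IsWeightedLipschitz V β γ fun x => ∫ y, f y ∂(P x)

/- The weight `β` and the rate `γ` of Hairer–Mattingly ("Yet another look at Harris' ergodic
theorem for Markov chains") for a kernel with drift `P V ≤ lam V + b` and minorization
`P x ≥ η ν` on `{V ≤ R}`. -/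

noncomputable def harrisWeight (b η : ℝ) : ℝ := η / (2 * b)

noncomputable def harrisRate (lam b η R : ℝ) : ℝ :=
  max (1 - η / 2) ((2 + η + lam * harrisWeight b η * R) / (2 + harrisWeight b η * R))

section HarrisConstants

variable {lam b η R : ℝ}

lemma harrisWeight_pos (hb : 0 < b) (hη : 0 < η) : 0 < harrisWeight b η := by
  unfold harrisWeight; positivity

lemma harrisWeight_mul (hb : 0 < b) : harrisWeight b η * b = η / 2 := by
  unfold harrisWeight; field_simp

lemma pos_of_div_one_sub_lt (hlam1 : lam < 1) (hb : 0 < b) (hR : 2 * b / (1 - lam) < R) :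
    0 < R :=
  lt_of_le_of_lt (div_nonneg (by positivity) (by linarith)) hR

lemma lam_le_harrisRate_right (hη : 0 < η) (hlam1 : lam < 1) (hb : 0 < b) (hR : 0 ≤ R) :
    lam ≤ (2 + η + lam * harrisWeight b η * R) / (2 + harrisWeight b η * R) := by
  have := harrisWeight_pos hb hη
  rw [le_div_iff₀ (by positivity)]
  nlinarith

lemma harrisRate_pos (hlam0 : 0 ≤ lam) (hb : 0 < b) (hη : 0 < η) (hR : 0 ≤ R) :
    0 < harrisRate lam b η R := by
  have := harrisWeight_pos hb hη
  exact lt_max_of_lt_right (by positivity)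

lemma harrisRate_lt_one (hlam1 : lam < 1) (hb : 0 < b) (hη : 0 < η)
    (hR : 2 * b / (1 - lam) < R) : harrisRate lam b η R < 1 := by
  have := harrisWeight_pos hb hη
  have := pos_of_div_one_sub_lt hlam1 hb hR
  refine max_lt (by linarith) ((div_lt_one (by positivity)).2 ?_)
  have h2b : 2 * b < R * (1 - lam) := (div_lt_iff₀ (by linarith)).1 hR
  have := harrisWeight_mul (η := η) hb
  nlinarith

lemma harrisRate_mul_ge_of_le (hlam1 : lam < 1) (hb : 0 < b) (hη : 0 < η) (hR : 0 ≤ R)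
    {S : ℝ} (hS : R ≤ S) :
    2 + η + lam * harrisWeight b η * S ≤ harrisRate lam b η R * (2 + harrisWeight b η * S) := by
  have hβ := harrisWeight_pos hb hη
  set β := harrisWeight b η
  set γ₁ := (2 + η + lam * β * R) / (2 + β * R)
  have hγ₁ : γ₁ * (2 + β * R) = 2 + η + lam * β * R := div_mul_cancel₀ _ (by positivity)
  calc 2 + η + lam * β * S = γ₁ * (2 + β * R) + lam * (β * (S - R)) := by rw [hγ₁]; ring
    _ ≤ γ₁ * (2 + β * R) + γ₁ * (β * (S - R)) :=
        add_le_add_right (mul_le_mul_of_nonneg_right (lam_le_harrisRate_right hη hlam1 hb hR)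
          (mul_nonneg hβ.le (sub_nonneg.2 hS))) _
    _ = γ₁ * (2 + β * S) := by ring
    _ ≤ harrisRate lam b η R * (2 + β * S) :=
        mul_le_mul_of_nonneg_right (le_max_right _ _) (by nlinarith)

lemma harrisRate_mul_ge (hlam1 : lam < 1) (hb : 0 < b) (hη : 0 < η) (hR : 0 ≤ R)
    {S : ℝ} (hS : 0 ≤ S) :
    2 - η + lam * harrisWeight b η * S ≤ harrisRate lam b η R * (2 + harrisWeight b η * S) := by
  have hβS : 0 ≤ harrisWeight b η * S := mul_nonneg (harrisWeight_pos hb hη).le hS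
  have h1 : 1 - η / 2 ≤ harrisRate lam b η R := le_max_left _ _
  have h2 : lam ≤ harrisRate lam b η R :=
    (lam_le_harrisRate_right hη hlam1 hb hR).trans (le_max_right _ _)
  nlinarith

end HarrisConstants

section WeightedBounds

variable {μ : Measure E} [IsProbabilityMeasure μ] {V f : E → ℝ} {β W : ℝ}

lemma integral_one_add_mul_le (hV : Measurable V) (hV0 : ∀ x, 0 ≤ V x) (hβ : 0 ≤ β)
    (hW : 0 ≤ W) (hVW : ∫⁻ x, ENNReal.ofReal (V x) ∂μ ≤ ENNReal.ofReal W) :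
    ∫ x, (1 + β * V x) ∂μ ≤ 1 + β * W := by
  rw [integral_add_mul (integrable_of_lintegral_ofReal_le hV hV0 hVW)]
  gcongr
  exact integral_le_of_lintegral_ofReal_le hV hV0 hW hVW

lemma abs_integral_le_of_lintegral_le (hV : Measurable V) (hV0 : ∀ x, 0 ≤ V x) (hβ : 0 ≤ β)
    (hW : 0 ≤ W) (hVW : ∫⁻ x, ENNReal.ofReal (V x) ∂μ ≤ ENNReal.ofReal W)
    (hfV : ∀ x, |f x| ≤ 1 + β * V x) : |∫ x, f x ∂μ| ≤ 1 + β * W :=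
  (abs_integral_le_of_abs_le
    ((integrable_const 1).add ((integrable_of_lintegral_ofReal_le hV hV0 hVW).const_mul β))
    hfV).trans (integral_one_add_mul_le hV hV0 hβ hW hVW)

lemma abs_integral_sub_smul_integral_le_of_lintegral_le {ν : Measure E} [IsProbabilityMeasure ν]
    (hV : Measurable V) (hV0 : ∀ x, 0 ≤ V x) (hβ : 0 ≤ β) (hW : 0 ≤ W)
    (hVW : ∫⁻ x, ENNReal.ofReal (V x) ∂μ ≤ ENNReal.ofReal W) {η : ℝ} (hη : 0 < η)
    (hle : ENNReal.ofReal η • ν ≤ μ) (hf : Measurable f) (hfV : ∀ x, |f x| ≤ 1 + β * V x) :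
    |∫ x, f x ∂μ - η * ∫ x, f x ∂ν| ≤ 1 + β * W - η := by
  have hVμ := integrable_of_lintegral_ofReal_le hV hV0 hVW
  have hVν : Integrable V ν := (integrable_smul_measure (ENNReal.ofReal_pos.2 hη).ne'
    ENNReal.ofReal_ne_top).1 (hVμ.mono_measure hle)
  have hν : 1 ≤ ∫ x, (1 + β * V x) ∂ν := by
    rw [integral_add_mul hVν]
    nlinarith [integral_nonneg (μ := ν) (f := V) hV0]
  have hg : Integrable (fun x => 1 + β * V x) μ := (integrable_const 1).add (hVμ.const_mul β)
  refine (abs_integral_sub_smul_integral_le hη.le hle hf hg hfV).trans ?_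
  nlinarith [integral_one_add_mul_le hV hV0 hβ hW hVW]

end WeightedBounds

theorem isWeightedContraction_of_drift_of_minorization {P : Kernel E E} [IsMarkovKernel P]
    {V : E → ℝ} (hV : Measurable V) (hV0 : ∀ x, 0 ≤ V x) {lam b η R : ℝ} (hlam0 : 0 ≤ lam)
    (hlam1 : lam < 1) (hb : 0 < b) (hη : 0 < η) (hR : 2 * b / (1 - lam) < R)
    (hdrift : ∀ x, ∫⁻ y, ENNReal.ofReal (V y) ∂(P x) ≤ ENNReal.ofReal (lam * V x + b))
    {ν : Measure E} [IsProbabilityMeasure ν]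
    (hminor : ∀ x, V x ≤ R → ENNReal.ofReal η • ν ≤ P x) :
    IsWeightedContraction P V (harrisWeight b η) (harrisRate lam b η R) := by
  intro f hf hfV x y
  have hR0 := pos_of_div_one_sub_lt hlam1 hb hR
  have hβ := harrisWeight_pos hb hη
  have hβb := harrisWeight_mul (η := η) hb
  set β := harrisWeight b η
  have hW w : 0 ≤ lam * V w + b := add_nonneg (mul_nonneg hlam0 (hV0 w)) hb.le
  rcases le_or_gt R (V x + V y) with hfar | hnear
  · -- Far from the small set the drift alone contracts.
    have habs w : |∫ z, f z ∂(P w)| ≤ 1 + β * (lam * V w + b) :=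
      abs_integral_le_of_lintegral_le hV hV0 hβ.le (hW w) (hdrift w) hfV
    calc |∫ z, f z ∂(P x) - ∫ z, f z ∂(P y)|
        ≤ |∫ z, f z ∂(P x)| + |∫ z, f z ∂(P y)| := abs_sub _ _
      _ ≤ 1 + β * (lam * V x + b) + (1 + β * (lam * V y + b)) := add_le_add (habs x) (habs y)
      _ = 2 + η + lam * β * (V x + V y) := by linear_combination 2 * hβb
      _ ≤ harrisRate lam b η R * (2 + β * (V x + V y)) :=
        harrisRate_mul_ge_of_le hlam1 hb hη hR0.le hfar
      _ = _ := by ring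
  · -- On the small set both chains can be coupled through `η ν`.
    have hsmall w (hw : V w ≤ R) :
        |∫ z, f z ∂(P w) - η * ∫ z, f z ∂ν| ≤ 1 + β * (lam * V w + b) - η :=
      abs_integral_sub_smul_integral_le_of_lintegral_le hV hV0 hβ.le (hW w) (hdrift w) hη
        (hminor w hw) hf hfV
    calc |∫ z, f z ∂(P x) - ∫ z, f z ∂(P y)|
        = |(∫ z, f z ∂(P x) - η * ∫ z, f z ∂ν) - (∫ z, f z ∂(P y) - η * ∫ z, f z ∂ν)| := by
          ring_nf
      _ ≤ |∫ z, f z ∂(P x) - η * ∫ z, f z ∂ν| + |∫ z, f z ∂(P y) - η * ∫ z, f z ∂ν| :=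
          abs_sub _ _
      _ ≤ 1 + β * (lam * V x + b) - η + (1 + β * (lam * V y + b) - η) :=
          add_le_add (hsmall x (by linarith [hV0 y])) (hsmall y (by linarith [hV0 x]))
      _ = 2 - η + lam * β * (V x + V y) := by linear_combination 2 * hβb
      _ ≤ harrisRate lam b η R * (2 + β * (V x + V y)) :=
        harrisRate_mul_ge hlam1 hb hη hR0.le (add_nonneg (hV0 x) (hV0 y))
      _ = _ := by ring

namespace IsWeightedLipschitz

variable {V f : E → ℝ} {β c : ℝ}

lemma integrable (h : IsWeightedLipschitz V β c f) (hf : Measurable f) {μ : Measure E}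
    [IsProbabilityMeasure μ] (hV : Integrable V μ) : Integrable f μ :=
  have := nonempty_of_isProbabilityMeasure μ
  hV.of_abs_le_mul_add hf (h.abs_le (Classical.arbitrary E))

lemma abs_sub_integral_le (h : IsWeightedLipschitz V β c f) (hf : Measurable f)
    {μ : Measure E} [IsProbabilityMeasure μ] (hV : Integrable V μ) (x : E) :
    |f x - ∫ y, f y ∂μ| ≤ c * (2 + β * V x + β * ∫ y, V y ∂μ) := by
  have hfi := h.integrable hf hV
  calc |f x - ∫ y, f y ∂μ| = |∫ y, (f x - f y) ∂μ| := by
        rw [integral_sub (integrable_const _) hfi, integral_const, probReal_univ, one_smul]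
    _ ≤ ∫ y, (c * (2 + β * V x) + c * β * V y) ∂μ :=
        abs_integral_le_of_abs_le ((integrable_const _).add (hV.const_mul _))
          fun y => (h x y).trans_eq (by ring)
    _ = c * (2 + β * V x + β * ∫ y, V y ∂μ) := by rw [integral_add_mul hV]; ring

lemma abs_integral_sub_integral_le (h : IsWeightedLipschitz V β c f) (hf : Measurable f)
    {μ ν : Measure E} [IsProbabilityMeasure μ] [IsProbabilityMeasure ν]
    (hVμ : Integrable V μ) (hVν : Integrable V ν) :
    |∫ x, f x ∂ν - ∫ y, f y ∂μ| ≤ c * (2 + β * ∫ x, V x ∂ν + β * ∫ y, V y ∂μ) := by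
  calc |∫ x, f x ∂ν - ∫ y, f y ∂μ| = |∫ x, (f x - ∫ y, f y ∂μ) ∂ν| := by
        rw [integral_sub (h.integrable hf hVν) (integrable_const _), integral_const,
          probReal_univ, one_smul]
    _ ≤ ∫ x, (c * (2 + β * ∫ y, V y ∂μ) + c * β * V x) ∂ν :=
        abs_integral_le_of_abs_le ((integrable_const _).add (hVν.const_mul _))
          fun x => (h.abs_sub_integral_le hf hVμ x).trans_eq (by ring)
    _ = c * (2 + β * ∫ x, V x ∂ν + β * ∫ y, V y ∂μ) := by rw [integral_add_mul hVν]; ring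

end IsWeightedLipschitz

namespace IsWeightedContraction

variable {P : Kernel E E} [IsMarkovKernel P] {V f : E → ℝ} {β γ c : ℝ}

lemma isWeightedLipschitz_integral (hP : IsWeightedContraction P V β γ)
    (hV : ∀ x, Integrable V (P x)) (hf : Measurable f) (hc : 0 < c)
    (h : IsWeightedLipschitz V β c f) :
    IsWeightedLipschitz V β (γ * c) fun x => ∫ y, f y ∂(P x) := by
  intro x y
  have := nonempty_of_isProbabilityMeasure (P x)
  obtain ⟨r, hr⟩ := h.exists_abs_sub_le
  have hnorm := hP (fun z => (f z - r) / c) ((hf.sub_const r).div_const c)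
    (fun z => by rw [abs_div, abs_of_pos hc, div_le_iff₀ hc, mul_comm]; exact hr z) x y
  have hshift w : ∫ z, (f z - r) / c ∂(P w) = (∫ z, f z ∂(P w) - r) / c := by
    rw [integral_div, integral_sub (h.integrable hf (hV w)) (integrable_const r), integral_const,
      probReal_univ, one_smul]
  simp only [hshift, ← sub_div, sub_sub_sub_cancel_right, abs_div, abs_of_pos hc,
    div_le_iff₀ hc] at hnorm
  linarith

lemma isWeightedLipschitz_integral_pow (hP : IsWeightedContraction P V β γ) (hγ : 0 < γ)
    (hV : ∀ n x, Integrable V ((P ^ n) x)) (hf : Measurable f) (hc : 0 < c)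
    (h : IsWeightedLipschitz V β c f) (k : ℕ) :
    IsWeightedLipschitz V β (γ ^ k * c) fun x => ∫ y, f y ∂((P ^ k) x) := by
  induction k with
  | zero =>
    intro x y
    simp only [Kernel.pow_zero_apply, integral_dirac' f _ hf.stronglyMeasurable]
    rw [pow_zero, one_mul]
    exact h x y
  | succ k ih =>
    have hcomp x : ∫ y, f y ∂((P ^ (k + 1)) x) = ∫ z, ∫ y, f y ∂((P ^ k) z) ∂(P x) := by
      rw [pow_succ]
      exact Kernel.integral_comp (h.integrable hf (hV (k + 1) x))
    simp only [hcomp]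
    rw [pow_succ', mul_assoc]
    exact hP.isWeightedLipschitz_integral (fun x => by simpa using hV 1 x)
      hf.stronglyMeasurable.integral_kernel.measurable (by positivity) ih

end IsWeightedContraction

theorem abs_integral_pow_sub_integral_le {κ : Kernel E E} [IsMarkovKernel κ] {V : E → ℝ}
    (hV : Measurable V) (hV0 : ∀ x, 0 ≤ V x) {K : ℝ} (hK : 0 ≤ K)
    (hstep : ∀ x, ∫⁻ y, ENNReal.ofReal (V y) ∂(κ x) ≤ ENNReal.ofReal (K * V x))
    {m : ℕ} {lam b η R : ℝ} (hlam0 : 0 ≤ lam) (hlam1 : lam < 1) (hb : 0 < b) (hη : 0 < η)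
    (hR : 2 * b / (1 - lam) < R)
    (hdrift : ∀ x, ∫⁻ y, ENNReal.ofReal (V y) ∂((κ ^ m) x) ≤ ENNReal.ofReal (lam * V x + b))
    {ν : Measure E} [IsProbabilityMeasure ν]
    (hminor : ∀ x, V x ≤ R → ENNReal.ofReal η • ν ≤ (κ ^ m) x)
    {μ : Measure E} [IsProbabilityMeasure μ] (hμ : κ.Invariant μ)
    {f : E → ℝ} (hf : Measurable f) (hfV : ∀ x, |f x| ≤ V x) (x : E) (k r : ℕ) :
    |∫ y, f y ∂((κ ^ (m * k + r)) x) - ∫ y, f y ∂μ|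
      ≤ harrisRate lam b η R ^ k * (2 / harrisWeight b η + K ^ r * V x + b / (1 - lam)) := by
  have hβ := harrisWeight_pos hb hη
  have hγ := harrisRate_pos hlam0 hb hη (pos_of_div_one_sub_lt hlam1 hb hR).le
  set β := harrisWeight b η
  set γ := harrisRate lam b η R
  have hVint n x : Integrable V ((κ ^ n) x) :=
    integrable_of_lintegral_ofReal_le hV hV0 (lintegral_pow_le_of_le_mul hV hV0 hK hstep n x)
  have hVr : ∫ y, V y ∂((κ ^ r) x) ≤ K ^ r * V x :=
    integral_le_of_lintegral_ofReal_le hV hV0 (by have := hV0 x; positivity)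
      (lintegral_pow_le_of_le_mul hV hV0 hK hstep r x)
  have hμV := lintegral_le_of_invariant_of_drift hV hV0 hlam0 hlam1 hb.le hdrift (hμ.pow m)
  have hVμ : Integrable V μ := integrable_of_lintegral_ofReal_le hV hV0 hμV
  have hVμB : ∫ y, V y ∂μ ≤ b / (1 - lam) :=
    integral_le_of_lintegral_ofReal_le hV hV0 (div_nonneg hb.le (by linarith)) hμV
  have hfint {ρ : Measure E} (hρ : Integrable V ρ) : Integrable f ρ :=
    hρ.mono' hf.aestronglyMeasurable (.of_forall hfV)
  set g : E → ℝ := fun y => ∫ z, f z ∂(((κ ^ m) ^ k) y)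
  have hg : IsWeightedLipschitz V β (γ ^ k * β⁻¹) g :=
    (isWeightedContraction_of_drift_of_minorization hV hV0 hlam0 hlam1 hb hη hR hdrift hminor
      ).isWeightedLipschitz_integral_pow hγ (fun n x => by rw [← pow_mul]; exact hVint _ x) hf
      (inv_pos.2 hβ) (.of_abs_le hβ hfV) k
  have hfg : ∫ y, f y ∂((κ ^ (m * k + r)) x) = ∫ y, g y ∂((κ ^ r) x) := by
    have := hfint (hVint (m * k + r) x)
    rw [pow_add, pow_mul] at this ⊢
    exact Kernel.integral_comp this
  have hfμ : ∫ y, f y ∂μ = ∫ y, g y ∂μ :=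
    (((hμ.pow m).pow k).integral_integral (hfint hVμ)).symm
  rw [hfg, hfμ]
  calc |∫ y, g y ∂((κ ^ r) x) - ∫ y, g y ∂μ|
      ≤ γ ^ k * β⁻¹ * (2 + β * ∫ y, V y ∂((κ ^ r) x) + β * ∫ y, V y ∂μ) :=
        hg.abs_integral_sub_integral_le hf.stronglyMeasurable.integral_kernel.measurable hVμ
          (hVint r x)
    _ ≤ γ ^ k * β⁻¹ * (2 + β * (K ^ r * V x) + β * (b / (1 - lam))) := by gcongr
    _ = γ ^ k * (2 / β + K ^ r * V x + b / (1 - lam)) := by field_simp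

lemma pow_le_inv_mul_rpow_inv_pow {γ : ℝ} (hγ0 : 0 < γ) (hγ1 : γ ≤ 1) {m r : ℕ} (hr : r < m)
    (k : ℕ) : γ ^ k ≤ γ⁻¹ * (γ ^ (m : ℝ)⁻¹) ^ (m * k + r) := by
  have hρ0 : 0 ≤ γ ^ (m : ℝ)⁻¹ := Real.rpow_nonneg hγ0.le _
  have hρ1 : γ ^ (m : ℝ)⁻¹ ≤ 1 := Real.rpow_le_one hγ0.le hγ1 (by positivity)
  have hρm : (γ ^ (m : ℝ)⁻¹) ^ m = γ := by
    rw [← Real.rpow_natCast, ← Real.rpow_mul hγ0.le,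
      inv_mul_cancel₀ (by exact_mod_cast (Nat.zero_le r).trans_lt hr |>.ne'), Real.rpow_one]
  calc γ ^ k = γ⁻¹ * ((γ ^ (m : ℝ)⁻¹) ^ m) ^ (k + 1) := by
        rw [hρm, pow_succ, mul_comm, mul_inv_cancel_right₀ hγ0.ne']
    _ ≤ γ⁻¹ * (γ ^ (m : ℝ)⁻¹) ^ (m * k + r) := by
        rw [← pow_mul]
        exact mul_le_mul_of_nonneg_left (pow_le_pow_of_le_one hρ0 hρ1 (by rw [mul_add]; omega))
          (inv_nonneg.2 hγ0.le)

lemma vDist_le {V : E → ℝ} {μ ν : Measure E} {A : ℝ} (hA : 0 ≤ A)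
    (h : ∀ f : E → ℝ, Measurable f → (∀ x, |f x| ≤ V x) → |∫ x, f x ∂μ - ∫ x, f x ∂ν| ≤ A) :
    vDist V μ ν ≤ A :=
  Real.iSup_le (fun f => h f.1 f.2.1 f.2.2) hA

lemma tendsto_measure_of_abs_integral_sub_le {V : E → ℝ} (hV1 : ∀ x, 1 ≤ V x)
    {μs : ℕ → Measure E} [∀ j, IsProbabilityMeasure (μs j)] {μ : Measure E}
    [IsProbabilityMeasure μ] {A ρ : ℝ} (hρ0 : 0 ≤ ρ) (hρ1 : ρ < 1)
    (h : ∀ j, ∀ f : E → ℝ, Measurable f → (∀ x, |f x| ≤ V x) →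
      |∫ x, f x ∂(μs j) - ∫ x, f x ∂μ| ≤ A * ρ ^ j)
    {s : Set E} (hs : MeasurableSet s) : Tendsto (fun j => μs j s) atTop (𝓝 (μ s)) := by
  have hind : ∀ x, |s.indicator 1 x| ≤ V x := fun x => by
    by_cases hx : x ∈ s <;> simp [hx, zero_le_one.trans (hV1 x), hV1 x]
  refine (ENNReal.tendsto_toReal_iff (fun j => measure_ne_top _ s) (measure_ne_top μ s)).1 ?_
  refine tendsto_iff_dist_tendsto_zero.2 (squeeze_zero (fun _ => dist_nonneg) (fun j => ?_)
    (by simpa using (tendsto_pow_atTop_nhds_zero_of_lt_one hρ0 hρ1).const_mul A))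
  simpa [Real.dist_eq, integral_indicator_one hs, measureReal_def] using
    h j _ (measurable_one.indicator hs) hind

lemma ProbabilityTheory.Kernel.Invariant.eq_of_tendsto {κ : Kernel E E} [IsMarkovKernel κ]
    {μ μ' : Measure E} [IsProbabilityMeasure μ'] (hμ' : κ.Invariant μ')
    (h : ∀ x, ∀ s, MeasurableSet s → Tendsto (fun j => (κ ^ j) x s) atTop (𝓝 (μ s))) :
    μ' = μ := by
  ext s hs
  have hconst j : ∫⁻ x, (κ ^ j) x s ∂μ' = μ' s := by
    rw [← Measure.bind_apply hs (Kernel.aemeasurable _), (hμ'.pow j).def]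
  have hlim : Tendsto (fun j => ∫⁻ x, (κ ^ j) x s ∂μ') atTop (𝓝 (∫⁻ _, μ s ∂μ')) :=
    tendsto_lintegral_of_dominated_convergence (fun _ => 1)
      (fun j => Kernel.measurable_coe _ hs) (fun j => .of_forall fun x => prob_le_one)
      (by simp) (.of_forall fun x => h x s hs)
  simpa [hconst] using hlim

noncomputable def ergodicRate (lam b η R : ℝ) (m : ℕ) : ℝ := harrisRate lam b η R ^ (m : ℝ)⁻¹

noncomputable def ergodicConst (lam b η R K : ℝ) (m : ℕ) : ℝ :=
  (2 / harrisWeight b η + K ^ m + b / (1 - lam)) / harrisRate lam b η R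

section ErgodicConstants

variable {lam b η R : ℝ}

lemma ergodicRate_mem_Ioo (hlam0 : 0 ≤ lam) (hlam1 : lam < 1) (hb : 0 < b) (hη : 0 < η)
    (hR : 2 * b / (1 - lam) < R) {m : ℕ} (hm : 1 ≤ m) : ergodicRate lam b η R m ∈ Ioo 0 1 := by
  have hγ0 := harrisRate_pos hlam0 hb hη (pos_of_div_one_sub_lt hlam1 hb hR).le
  exact ⟨Real.rpow_pos_of_pos hγ0 _,
    Real.rpow_lt_one hγ0.le (harrisRate_lt_one hlam1 hb hη hR) (by positivity)⟩

lemma ergodicConst_pos (hlam0 : 0 ≤ lam) (hlam1 : lam < 1) (hb : 0 < b) (hη : 0 < η)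
    (hR : 2 * b / (1 - lam) < R) {K : ℝ} (hK : 0 ≤ K) (m : ℕ) :
    0 < ergodicConst lam b η R K m := by
  have := harrisWeight_pos hb hη
  have := harrisRate_pos hlam0 hb hη (pos_of_div_one_sub_lt hlam1 hb hR).le
  have : 0 ≤ b / (1 - lam) := div_nonneg hb.le (by linarith)
  unfold ergodicConst
  positivity

end ErgodicConstants

theorem abs_integral_pow_sub_integral_le_mul_pow {κ : Kernel E E} [IsMarkovKernel κ]
    {V : E → ℝ} (hV : Measurable V) (hV1 : ∀ x, 1 ≤ V x) {K : ℝ} (hK : 1 ≤ K)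
    (hstep : ∀ x, ∫⁻ y, ENNReal.ofReal (V y) ∂(κ x) ≤ ENNReal.ofReal (K * V x))
    {m : ℕ} (hm : 1 ≤ m) {lam b η R : ℝ} (hlam0 : 0 ≤ lam) (hlam1 : lam < 1) (hb : 0 < b)
    (hη : 0 < η) (hR : 2 * b / (1 - lam) < R)
    (hdrift : ∀ x, ∫⁻ y, ENNReal.ofReal (V y) ∂((κ ^ m) x) ≤ ENNReal.ofReal (lam * V x + b))
    {ν : Measure E} [IsProbabilityMeasure ν]
    (hminor : ∀ x, V x ≤ R → ENNReal.ofReal η • ν ≤ (κ ^ m) x)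
    {μ : Measure E} [IsProbabilityMeasure μ] (hμ : κ.Invariant μ)
    {f : E → ℝ} (hf : Measurable f) (hfV : ∀ x, |f x| ≤ V x) (x : E) (j : ℕ) :
    |∫ y, f y ∂((κ ^ j) x) - ∫ y, f y ∂μ|
      ≤ ergodicConst lam b η R K m * V x * ergodicRate lam b η R m ^ j := by
  unfold ergodicConst ergodicRate
  have hβ := harrisWeight_pos hb hη
  have hγ0 := harrisRate_pos hlam0 hb hη (pos_of_div_one_sub_lt hlam1 hb hR).le
  have hγ1 := harrisRate_lt_one hlam1 hb hη hR
  have hB : 0 ≤ b / (1 - lam) := div_nonneg hb.le (by linarith)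
  have h2β : 0 ≤ 2 / harrisWeight b η := by positivity
  set γ := harrisRate lam b η R
  set A := 2 / harrisWeight b η + K ^ m + b / (1 - lam)
  have hAV : 0 ≤ A * V x := mul_nonneg (by positivity) (zero_le_one.trans (hV1 x))
  obtain ⟨k, r, hr, rfl⟩ : ∃ k r, r < m ∧ j = m * k + r :=
    ⟨j / m, j % m, Nat.mod_lt _ hm, (Nat.div_add_mod j m).symm⟩
  have hKr : K ^ r ≤ K ^ m := pow_le_pow_right₀ hK hr.le
  calc _ ≤ γ ^ k * (2 / harrisWeight b η + K ^ r * V x + b / (1 - lam)) :=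
        abs_integral_pow_sub_integral_le hV (fun x => zero_le_one.trans (hV1 x))
          (zero_le_one.trans hK) hstep hlam0 hlam1 hb hη hR hdrift hminor hμ hf hfV x k r
    _ ≤ γ ^ k * (A * V x) := by
        have hVx := hV1 x
        gcongr
        nlinarith [mul_le_mul_of_nonneg_left hVx h2β, mul_le_mul_of_nonneg_left hVx hB,
          mul_le_mul_of_nonneg_right hKr (zero_le_one.trans hVx)]
    _ ≤ γ⁻¹ * (γ ^ (m : ℝ)⁻¹) ^ (m * k + r) * (A * V x) :=
        mul_le_mul_of_nonneg_right (pow_le_inv_mul_rpow_inv_pow hγ0 hγ1.le hr k) hAV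
    _ = A / γ * V x * (γ ^ (m : ℝ)⁻¹) ^ (m * k + r) := by ring

theorem geometric_ergodicity_of_drift_of_minorization {κ : Kernel E E} [IsMarkovKernel κ]
    {V : E → ℝ} (hV : Measurable V) (hV1 : ∀ x, 1 ≤ V x) {K : ℝ} (hK : 1 ≤ K)
    (hstep : ∀ x, ∫⁻ y, ENNReal.ofReal (V y) ∂(κ x) ≤ ENNReal.ofReal (K * V x))
    {m : ℕ} (hm : 1 ≤ m) {lam b η R : ℝ} (hlam0 : 0 ≤ lam) (hlam1 : lam < 1) (hb : 0 < b)
    (hη : 0 < η) (hR : 2 * b / (1 - lam) < R)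
    (hdrift : ∀ x, ∫⁻ y, ENNReal.ofReal (V y) ∂((κ ^ m) x) ≤ ENNReal.ofReal (lam * V x + b))
    {ν : Measure E} [IsProbabilityMeasure ν]
    (hminor : ∀ x, V x ≤ R → ENNReal.ofReal η • ν ≤ (κ ^ m) x)
    {μ : Measure E} [IsProbabilityMeasure μ] (hμ : κ.Invariant μ) :
    (∀ μ' : Measure E, IsProbabilityMeasure μ' → κ.Invariant μ' → μ' = μ) ∧
    (∀ x j, vDist V ((κ ^ j) x) μ
      ≤ ergodicConst lam b η R K m * V x * ergodicRate lam b η R m ^ j) ∧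
    ∫⁻ x, ENNReal.ofReal (V x) ∂μ ≤ ENNReal.ofReal (b / (1 - lam)) := by
  have hbound {f : E → ℝ} (hf : Measurable f) (hfV : ∀ x, |f x| ≤ V x) :=
    abs_integral_pow_sub_integral_le_mul_pow hV hV1 hK hstep hm hlam0 hlam1 hb hη hR hdrift hminor
      hμ hf hfV
  have hρ := ergodicRate_mem_Ioo hlam0 hlam1 hb hη hR hm
  have hC := ergodicConst_pos hlam0 hlam1 hb hη hR (zero_le_one.trans hK) m
  refine ⟨fun μ' _ hμ' => hμ'.eq_of_tendsto fun x s hs =>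
      tendsto_measure_of_abs_integral_sub_le hV1 hρ.1.le hρ.2
        (fun j f hf hfV => hbound hf hfV x j) hs,
    fun x j => vDist_le (by have := hV1 x; have := hρ.1; positivity)
      (fun f hf hfV => hbound hf hfV x j),
    lintegral_le_of_invariant_of_drift hV (fun x => zero_le_one.trans (hV1 x)) hlam0 hlam1
      hb.le hdrift (hμ.pow m)⟩

theorem statement14_general
    {E : Type*} [MeasurableSpace E]
    (Q : ℝ → E → Measure E)
    (hQmeas : ∀ u, Measurable (Q u))
    (hQprob : ∀ u x, IsProbabilityMeasure (Q u x))
    (V : E → ℝ) (hVmeas : Measurable V) (hV1 : ∀ x, 1 ≤ V x)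
    -- Assumption F1
    (ε lam b K : ℝ) (m : ℕ)
    (hε : 0 < ε) (hlam : lam ∈ Set.Ioo (0:ℝ) 1) (hm : 1 ≤ m) (hb : 0 < b) (hK : 1 ≤ K)
    (hdrift1 : ∀ u ∈ Icc (0:ℝ) 1, ∀ x,
      (∫⁻ y, ENNReal.ofReal (V y) ∂(Q u x)) ≤ ENNReal.ofReal (K * V x))
    (hdriftm : ∀ u ∈ Icc (0:ℝ) 1, ∀ us : Fin m → ℝ,
      (∀ i, us i ∈ Icc (0:ℝ) 1 ∧ |u - us i| ≤ ε) → ∀ x,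
      (∫⁻ y, ENNReal.ofReal (V y) ∂(seqStep Q (List.ofFn us) x))
        ≤ ENNReal.ofReal (lam * V x + b))
    (η R : ℝ) (hη : 0 < η) (hR : 2 * b / (1 - lam) < R)
    (ν : Measure E) (hν : IsProbabilityMeasure ν)
    (hminor : ∀ u ∈ Icc (0:ℝ) 1, ∀ us : Fin m → ℝ,
      (∀ i, us i ∈ Icc (0:ℝ) 1 ∧ |u - us i| ≤ ε) → ∀ x, V x ≤ R →
      ∀ s : Set E, ENNReal.ofReal η * ν s ≤ seqStep Q (List.ofFn us) x s)
    -- the invariant probabilities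
    (π : ℝ → Measure E)
    (hπ : ∀ u ∈ Icc (0:ℝ) 1, IsProbabilityMeasure (π u) ∧ (π u).bind (Q u) = π u) :
    -- uniqueness of the invariant probability
    (∀ u ∈ Icc (0:ℝ) 1, ∀ π' : Measure E, IsProbabilityMeasure π' →
      π'.bind (Q u) = π' → π' = π u) ∧
    -- geometric ergodicity in V-norm, uniformly in u
    (∃ C > (0:ℝ), ∃ ρ ∈ Set.Ioo (0:ℝ) 1, ∀ u ∈ Icc (0:ℝ) 1, ∀ (x : E) (j : ℕ),
      vDist V (mstep (Q u) j x) (π u) ≤ C * V x * ρ ^ j) ∧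
    -- sup_u π_u V < ∞
    (∃ M : ℝ, ∀ u ∈ Icc (0:ℝ) 1,
      (∫⁻ x, ENNReal.ofReal (V x) ∂(π u)) ≤ ENNReal.ofReal M) := by
  let κ u : Kernel E E := ⟨Q u, hQmeas u⟩
  have (u : ℝ) : IsMarkovKernel (κ u) := ⟨hQprob u⟩
  have hpow u n : mstep (Q u) n = ⇑(κ u ^ n) := mstep_eq_pow (κ u) n
  have hconst u (hu : u ∈ Icc (0:ℝ) 1) :
      (∀ i : Fin m, u ∈ Icc (0:ℝ) 1 ∧ |u - u| ≤ ε) ∧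
        seqStep Q (List.ofFn fun _ : Fin m => u) = ⇑(κ u ^ m) := by
    refine ⟨fun _ => ⟨hu, by simpa using hε.le⟩, ?_⟩
    rw [List.ofFn_const, seqStep_replicate, hpow]
  have hergodic u (hu : u ∈ Icc (0:ℝ) 1) :=
    have := (hπ u hu).1
    geometric_ergodicity_of_drift_of_minorization (κ := κ u) hVmeas hV1 hK (hdrift1 u hu) hm
      hlam.1.le hlam.2 hb hη hR (fun x => (hconst u hu).2 ▸ hdriftm u hu _ (hconst u hu).1 x)
      (fun x hx => Measure.le_iff'.2 fun s =>
        (hconst u hu).2 ▸ hminor u hu _ (hconst u hu).1 x hx s)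
      (hπ u hu).2
  exact ⟨fun u hu π' _ hπ' => (hergodic u hu).1 π' ‹_› hπ',
    ⟨_, ergodicConst_pos hlam.1.le hlam.2 hb hη hR (zero_le_one.trans hK) m,
      _, ergodicRate_mem_Ioo hlam.1.le hlam.2 hb hη hR hm,
      fun u hu x j => hpow u j ▸ (hergodic u hu).2.1 x j⟩,
    ⟨_, fun u hu => (hergodic u hu).2.2⟩⟩

theorem statement14
    {E : Type*} [MeasurableSpace E]
    (Q : ℝ → E → Measure E)
    (hQmeas : ∀ u, Measurable (Q u))
    (hQprob : ∀ u x, IsProbabilityMeasure (Q u x))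
    (V : E → ℝ) (hVmeas : Measurable V) (hV1 : ∀ x, 1 ≤ V x)
    -- Assumption F1
    (ε lam b K : ℝ) (m : ℕ)
    (hε : 0 < ε) (hlam : lam ∈ Set.Ioo (0:ℝ) 1) (hm : 1 ≤ m) (hb : 0 < b) (hK : 1 ≤ K)
    (hdrift1 : ∀ u ∈ Icc (0:ℝ) 1, ∀ x,
      (∫⁻ y, ENNReal.ofReal (V y) ∂(Q u x)) ≤ ENNReal.ofReal (K * V x))
    (hdriftm : ∀ u ∈ Icc (0:ℝ) 1, ∀ us : Fin m → ℝ,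
      (∀ i, us i ∈ Icc (0:ℝ) 1 ∧ |u - us i| ≤ ε) → ∀ x,
      (∫⁻ y, ENNReal.ofReal (V y) ∂(seqStep Q (List.ofFn us) x))
        ≤ ENNReal.ofReal (lam * V x + b))
    (η R : ℝ) (hη : 0 < η) (hR : 2 * b / (1 - lam) < R)
    (ν : Measure E) (hν : IsProbabilityMeasure ν)
    (hminor : ∀ u ∈ Icc (0:ℝ) 1, ∀ us : Fin m → ℝ,
      (∀ i, us i ∈ Icc (0:ℝ) 1 ∧ |u - us i| ≤ ε) → ∀ x, V x ≤ R →
      ∀ s : Set E, ENNReal.ofReal η * ν s ≤ seqStep Q (List.ofFn us) x s)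
    -- the invariant probabilities
    (π : ℝ → Measure E)
    (hπ : ∀ u ∈ Icc (0:ℝ) 1, IsProbabilityMeasure (π u) ∧ (π u).bind (Q u) = π u)
    -- Assumption F2
    (κ : ℝ) (hκ : κ ∈ Set.Ioo (0:ℝ) 1)
    (Vt : E → ℝ) (hVt : ∀ x, 0 < Vt x)
    (hVtπ : ∃ M : ℝ, ∀ u ∈ Icc (0:ℝ) 1,
      (∫⁻ x, ENNReal.ofReal (Vt x) ∂(π u)) ≤ ENNReal.ofReal M)
    (hF2 : ∀ u ∈ Icc (0:ℝ) 1, ∀ v ∈ Icc (0:ℝ) 1, ∀ x,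
      vDist V (Q u x) (Q v x) ≤ Vt x * |u - v| ^ κ) :
    -- uniqueness of the invariant probability
    (∀ u ∈ Icc (0:ℝ) 1, ∀ π' : Measure E, IsProbabilityMeasure π' →
      π'.bind (Q u) = π' → π' = π u) ∧
    -- geometric ergodicity in V-norm, uniformly in u
    (∃ C > (0:ℝ), ∃ ρ ∈ Set.Ioo (0:ℝ) 1, ∀ u ∈ Icc (0:ℝ) 1, ∀ (x : E) (j : ℕ),
      vDist V (mstep (Q u) j x) (π u) ≤ C * V x * ρ ^ j) ∧
    -- sup_u π_u V < ∞
    (∃ M : ℝ, ∀ u ∈ Icc (0:ℝ) 1,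
      (∫⁻ x, ENNReal.ofReal (V x) ∂(π u)) ≤ ENNReal.ofReal M) :=
  statement14_general Q hQmeas hQprob V hVmeas hV1 ε lam b K m hε hlam hm hb hK hdrift1 hdriftm η R
    hη hR ν hν hminor π hπ
end

section
/- Assume assumption F1 holds and n ≥ m/ε. Then for j = mg + s with 0 ≤ s < m, the V-norm mixing coefficient satisfies β^{(V)}_n(j) ≤ 2 δ^{−1} sup_{k≤n} π^{(n)}_k V · K^s γ^g, where δ, γ ∈ (0,1) are the constants from the Hairer–Mattingly contraction lemma (i.e., Δ_{V_δ}(Q_{u₁}⋯Q_{u_m}) ≤ γ whenever |u_i − u| ≤ ε, with V_δ = 1 − δ + δV). -/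
open MeasureTheory ProbabilityTheory Filter Set
open scoped ENNReal NNReal

noncomputable section

variable {E : Type*} [MeasurableSpace E]

/-- The `V`-norm mixing coefficient
`β^{(V)}_n(j) = sup_{k≤n} E‖π^{(n)}_k − δ_{X_{n,k−j}} Q_{(k−j+1)/n}⋯Q_{k/n}‖_V`. -/
noncomputable def betaV (V : E → ℝ) (Q : ℝ → E → Measure E)
    (πn : ℕ → ℤ → Measure E) (n : ℕ) (j : ℕ) : ℝ :=
  ⨆ k : {k : ℤ // k ≤ (n:ℤ)},
    ∫ x, vDist V (tvstep Q n ((k:ℤ) - j) j x) (πn n k) ∂(πn n ((k:ℤ) - j))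

/-!
Hairer–Mattingly argument. For the weight `W = 1 - δ + δ V`, the drift condition and the
minorization on `{V ≤ R}` give the oscillation bound `|P f x - P f y| ≤ γ (W x + W y)` for every
block `P = Q_{u₁} ⋯ Q_{u_m}` and every `|f| ≤ W`: where `V x + V y ≥ R` the drift wins, and
where `V x, V y ≤ R` the common part `η ν` of `P x` and `P y` cancels. Integrating it against the
Jordan parts of `μ₁ - μ₂` gives `‖μ₁ P - μ₂ P‖_W ≤ γ ‖μ₁ - μ₂‖_W`.

For `n ≥ m / ε`, the times `(i + 1) / n, …, (i + m) / n` of `m` consecutive steps lie within `ε`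
of each other, so each such block contracts by `γ`, while a single step expands by at most `K`.
Since `π_k = π_{k-j} Q_{(k-j+1)/n} ⋯ Q_{k/n}` and `δ_x Q_{(k-j+1)/n} ⋯ Q_{k/n}` is the image of
`δ_x`, the `j = m g + s` steps cost `K ^ s γ ^ g`, passing between `W` and `V` (`δ V ≤ W ≤ V`)
costs `δ⁻¹`, and `‖δ_x - π_{k-j}‖_V ≤ V x + M` integrates to `2 M`.
-/

namespace VDist

variable {W : E → ℝ} {κ : E → Measure E}

lemma abs_integral_le_of_abs_le {f : E → ℝ} {μ : Measure E} (hfW : ∀ x, |f x| ≤ W x) {B : ℝ}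
    (hB : 0 ≤ B) (hμ : ∫⁻ x, ENNReal.ofReal (W x) ∂μ ≤ ENNReal.ofReal B) :
    |∫ x, f x ∂μ| ≤ B := by
  calc |∫ x, f x ∂μ| ≤ (∫⁻ x, ENNReal.ofReal ‖f x‖ ∂μ).toReal := norm_integral_le_lintegral_norm f
    _ ≤ (ENNReal.ofReal B).toReal := by
        refine ENNReal.toReal_mono ENNReal.ofReal_ne_top (le_trans (lintegral_mono fun x => ?_) hμ)
        exact ENNReal.ofReal_le_ofReal (hfW x)
    _ = B := ENNReal.toReal_ofReal hB

lemma integrable_of_abs_le (hWm : Measurable W) {f : E → ℝ} {μ : Measure E}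
    (hfm : AEStronglyMeasurable f μ) (hfW : ∀ x, |f x| ≤ W x)
    (hμ : ∫⁻ x, ENNReal.ofReal (W x) ∂μ < ∞) : Integrable f μ := by
  have hW : Integrable W μ := by
    refine ⟨hWm.aestronglyMeasurable, ?_⟩
    rwa [hasFiniteIntegral_iff_ofReal (.of_forall fun x => (abs_nonneg _).trans (hfW x))]
  exact hW.mono' hfm (.of_forall hfW)

lemma vDist_nonneg (μ ν : Measure E) : 0 ≤ vDist W μ ν :=
  Real.iSup_nonneg fun _ => abs_nonneg _

lemma vDist_le (hW : ∀ x, 0 ≤ W x) {μ ν : Measure E} {B : ℝ}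
    (h : ∀ f : E → ℝ, Measurable f → (∀ x, |f x| ≤ W x) →
      |(∫ x, f x ∂μ) - ∫ x, f x ∂ν| ≤ B) : vDist W μ ν ≤ B :=
  haveI : Nonempty {f : E → ℝ // Measurable f ∧ ∀ x, |f x| ≤ W x} :=
    ⟨⟨0, measurable_const, fun x => by simpa using hW x⟩⟩
  ciSup_le fun f => h f.1 f.2.1 f.2.2

lemma abs_integral_sub_le_add {μ ν : Measure E} {f : E → ℝ}
    (hfW : ∀ x, |f x| ≤ W x) {B₁ B₂ : ℝ} (hB₁ : 0 ≤ B₁) (hB₂ : 0 ≤ B₂)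
    (hμ : ∫⁻ x, ENNReal.ofReal (W x) ∂μ ≤ ENNReal.ofReal B₁)
    (hν : ∫⁻ x, ENNReal.ofReal (W x) ∂ν ≤ ENNReal.ofReal B₂) :
    |(∫ x, f x ∂μ) - ∫ x, f x ∂ν| ≤ B₁ + B₂ :=
  (abs_sub _ _).trans (add_le_add (abs_integral_le_of_abs_le hfW hB₁ hμ)
    (abs_integral_le_of_abs_le hfW hB₂ hν))

lemma vDist_le_add (hW : ∀ x, 0 ≤ W x) {μ ν : Measure E} {B₁ B₂ : ℝ} (hB₁ : 0 ≤ B₁)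
    (hB₂ : 0 ≤ B₂) (hμ : ∫⁻ x, ENNReal.ofReal (W x) ∂μ ≤ ENNReal.ofReal B₁)
    (hν : ∫⁻ x, ENNReal.ofReal (W x) ∂ν ≤ ENNReal.ofReal B₂) :
    vDist W μ ν ≤ B₁ + B₂ :=
  vDist_le hW fun _ _ hfW => abs_integral_sub_le_add hfW hB₁ hB₂ hμ hν

lemma le_vDist {μ ν : Measure E} (hμ : ∫⁻ x, ENNReal.ofReal (W x) ∂μ < ∞)
    (hν : ∫⁻ x, ENNReal.ofReal (W x) ∂ν < ∞) {f : E → ℝ} (hfm : Measurable f)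
    (hfW : ∀ x, |f x| ≤ W x) :
    |(∫ x, f x ∂μ) - ∫ x, f x ∂ν| ≤ vDist W μ ν := by
  refine le_ciSup (f := fun f : {f : E → ℝ // Measurable f ∧ ∀ x, |f x| ≤ W x} =>
    |(∫ x, f.1 x ∂μ) - ∫ x, f.1 x ∂ν|)
    ⟨(∫⁻ x, ENNReal.ofReal (W x) ∂μ).toReal + (∫⁻ x, ENNReal.ofReal (W x) ∂ν).toReal, ?_⟩
    ⟨f, hfm, hfW⟩
  rintro _ ⟨g, rfl⟩
  exact abs_integral_sub_le_add g.2.2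
    ENNReal.toReal_nonneg ENNReal.toReal_nonneg (ENNReal.ofReal_toReal hμ.ne).ge
    (ENNReal.ofReal_toReal hν.ne).ge

lemma abs_integral_sub_le_mul_vDist {μ ν : Measure E}
    (hμ : ∫⁻ x, ENNReal.ofReal (W x) ∂μ < ∞) (hν : ∫⁻ x, ENNReal.ofReal (W x) ∂ν < ∞)
    {c : ℝ} (hc : 0 < c) {F : E → ℝ} (hFm : Measurable F) (hFW : ∀ x, |F x| ≤ c * W x) :
    |(∫ x, F x ∂μ) - ∫ x, F x ∂ν| ≤ c * vDist W μ ν := by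
  have hscaled := le_vDist hμ hν (hFm.const_mul c⁻¹) fun x => by
    rw [abs_mul, abs_inv, abs_of_pos hc, inv_mul_le_iff₀ hc]
    exact hFW x
  rwa [integral_const_mul, integral_const_mul, ← mul_sub, abs_mul, abs_inv, abs_of_pos hc,
    inv_mul_le_iff₀ hc] at hscaled

lemma vDist_le_mul_vDist {W' : E → ℝ} (hW : ∀ x, 0 ≤ W x) {c : ℝ} (hc : 0 < c)
    (hWW' : ∀ x, W x ≤ c * W' x) {μ ν : Measure E}
    (hμ : ∫⁻ x, ENNReal.ofReal (W' x) ∂μ < ∞) (hν : ∫⁻ x, ENNReal.ofReal (W' x) ∂ν < ∞) :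
    vDist W μ ν ≤ c * vDist W' μ ν :=
  vDist_le hW fun _ hfm hfW => abs_integral_sub_le_mul_vDist hμ hν hc hfm fun x =>
    (hfW x).trans (hWW' x)

/-- `vDist W` is a real `⨆`, which is meaningful only between measures with finite `W`-moment. -/
def IsVDistLipschitz (W : E → ℝ) (κ : E → Measure E) (c : ℝ) : Prop :=
  ∀ μ₁ μ₂ : Measure E, IsProbabilityMeasure μ₁ → IsProbabilityMeasure μ₂ →
    ∫⁻ x, ENNReal.ofReal (W x) ∂μ₁ < ∞ → ∫⁻ x, ENNReal.ofReal (W x) ∂μ₂ < ∞ →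
    vDist W (μ₁.bind κ) (μ₂.bind κ) ≤ c * vDist W μ₁ μ₂

lemma isVDistLipschitz_dirac : IsVDistLipschitz W Measure.dirac 1 := by
  intro μ₁ μ₂ _ _ _ _
  rw [Measure.bind_dirac, Measure.bind_dirac, one_mul]

lemma integral_bind (hκ : Measurable κ) {μ : Measure E} {f : E → ℝ}
    (hf : Integrable f (μ.bind κ)) : ∫ y, f y ∂μ.bind κ = ∫ x, ∫ y, f y ∂κ x ∂μ :=
  Kernel.integral_comp (κ := Kernel.const Unit μ) (η := ⟨κ, hκ⟩) (a := ()) hf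

lemma integrable_integral_bind (hκ : Measurable κ) {μ : Measure E} {f : E → ℝ}
    (hf : Integrable f (μ.bind κ)) : Integrable (fun x => ∫ y, f y ∂κ x) μ :=
  hf.integral_comp (κ := Kernel.const Unit μ) (η := ⟨κ, hκ⟩) (a := ())

lemma measurable_integral_kernel (hκ : Measurable κ) {f : E → ℝ} (hf : Measurable f) :
    Measurable fun x => ∫ y, f y ∂κ x :=
  (hf.stronglyMeasurable.integral_kernel (κ := ⟨κ, hκ⟩)).measurable

lemma lintegral_bind_le_of_drift (hκ : Measurable κ) (hWm : Measurable W) {C : ℝ} (hC : 0 ≤ C)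
    (hdrift : ∀ x, ∫⁻ y, ENNReal.ofReal (W y) ∂κ x ≤ ENNReal.ofReal (C * W x))
    (μ : Measure E) :
    ∫⁻ y, ENNReal.ofReal (W y) ∂μ.bind κ ≤ ENNReal.ofReal C * ∫⁻ x, ENNReal.ofReal (W x) ∂μ := by
  rw [Measure.lintegral_bind hκ.aemeasurable hWm.ennreal_ofReal.aemeasurable,
    ← lintegral_const_mul _ hWm.ennreal_ofReal]
  exact lintegral_mono fun x => (hdrift x).trans_eq (ENNReal.ofReal_mul hC)

lemma lintegral_bind_lt_top_of_drift (hκ : Measurable κ) (hWm : Measurable W) {C : ℝ}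
    (hC : 0 ≤ C) (hdrift : ∀ x, ∫⁻ y, ENNReal.ofReal (W y) ∂κ x ≤ ENNReal.ofReal (C * W x))
    {μ : Measure E} (hμ : ∫⁻ x, ENNReal.ofReal (W x) ∂μ < ∞) :
    ∫⁻ y, ENNReal.ofReal (W y) ∂μ.bind κ < ∞ :=
  (lintegral_bind_le_of_drift hκ hWm hC hdrift μ).trans_lt
    (ENNReal.mul_lt_top ENNReal.ofReal_lt_top hμ)

lemma integral_bind_sub_integral_bind (hκ : Measurable κ) (hWm : Measurable W) {C : ℝ}
    (hC : 0 ≤ C) (hdrift : ∀ x, ∫⁻ y, ENNReal.ofReal (W y) ∂κ x ≤ ENNReal.ofReal (C * W x))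
    {μ ν : Measure E} (hμ : ∫⁻ x, ENNReal.ofReal (W x) ∂μ < ∞)
    (hν : ∫⁻ x, ENNReal.ofReal (W x) ∂ν < ∞) {f : E → ℝ} (hfm : Measurable f)
    (hfW : ∀ x, |f x| ≤ W x) :
    (∫ y, f y ∂μ.bind κ) - ∫ y, f y ∂ν.bind κ
      = (∫ x, ∫ y, f y ∂κ x ∂μ) - ∫ x, ∫ y, f y ∂κ x ∂ν := by
  rw [integral_bind hκ (integrable_of_abs_le hWm hfm.aestronglyMeasurable hfW
      (lintegral_bind_lt_top_of_drift hκ hWm hC hdrift hμ)),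
    integral_bind hκ (integrable_of_abs_le hWm hfm.aestronglyMeasurable hfW
      (lintegral_bind_lt_top_of_drift hκ hWm hC hdrift hν))]

lemma isVDistLipschitz_of_drift (hκ : Measurable κ) (hWm : Measurable W)
    (hWnn : ∀ x, 0 ≤ W x) {C : ℝ} (hC : 0 < C)
    (hdrift : ∀ x, ∫⁻ y, ENNReal.ofReal (W y) ∂κ x ≤ ENNReal.ofReal (C * W x)) :
    IsVDistLipschitz W κ C := by
  intro μ ν _ _ hμ hν
  refine vDist_le hWnn fun f hfm hfW => ?_
  rw [integral_bind_sub_integral_bind hκ hWm hC.le hdrift hμ hν hfm hfW]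
  exact abs_integral_sub_le_mul_vDist hμ hν hC (measurable_integral_kernel hκ hfm) fun x =>
    abs_integral_le_of_abs_le hfW (mul_nonneg hC.le (hWnn x)) (hdrift x)

lemma IsVDistLipschitz.bind {κ₁ κ₂ : E → Measure E} {c₁ c₂ : ℝ}
    (h₁ : IsVDistLipschitz W κ₁ c₁) (h₂ : IsVDistLipschitz W κ₂ c₂) (hc₂ : 0 ≤ c₂)
    (hκ₁ : Measurable κ₁) (hκ₂ : Measurable κ₂) (hκ₁p : ∀ x, IsProbabilityMeasure (κ₁ x))
    (hWm : Measurable W) {C : ℝ} (hC : 0 ≤ C)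
    (hdrift : ∀ x, ∫⁻ y, ENNReal.ofReal (W y) ∂κ₁ x ≤ ENNReal.ofReal (C * W x)) :
    IsVDistLipschitz W (fun x => (κ₁ x).bind κ₂) (c₂ * c₁) := by
  intro μ₁ μ₂ _ _ hμ₁ hμ₂
  have hp : ∀ μ : Measure E, IsProbabilityMeasure μ → IsProbabilityMeasure (μ.bind κ₁) :=
    fun μ _ => isProbabilityMeasure_bind hκ₁.aemeasurable (.of_forall hκ₁p)
  rw [← Measure.bind_bind hκ₁.aemeasurable hκ₂.aemeasurable,
    ← Measure.bind_bind hκ₁.aemeasurable hκ₂.aemeasurable, mul_assoc]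
  exact (h₂ _ _ (hp μ₁ ‹_›) (hp μ₂ ‹_›) (lintegral_bind_lt_top_of_drift hκ₁ hWm hC hdrift hμ₁)
    (lintegral_bind_lt_top_of_drift hκ₁ hWm hC hdrift hμ₂)).trans
    (mul_le_mul_of_nonneg_left (h₁ _ _ ‹_› ‹_› hμ₁ hμ₂) hc₂)

lemma exists_add_eq_add_mutuallySingular (μ₁ μ₂ : Measure E) [IsFiniteMeasure μ₁]
    [IsFiniteMeasure μ₂] :
    ∃ p q : Measure E, IsFiniteMeasure p ∧ IsFiniteMeasure q ∧ μ₂ + p = μ₁ + q ∧ p ⟂ₘ q := by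
  set j := (μ₁.toSignedMeasure - μ₂.toSignedMeasure).toJordanDecomposition
  refine ⟨j.posPart, j.negPart, j.posPart_finite, j.negPart_finite, ?_, j.mutuallySingular⟩
  have hj : j.posPart.toSignedMeasure - j.negPart.toSignedMeasure
      = μ₁.toSignedMeasure - μ₂.toSignedMeasure :=
    SignedMeasure.toSignedMeasure_toJordanDecomposition _
  rw [← Measure.toSignedMeasure_eq_toSignedMeasure_iff, Measure.toSignedMeasure_add,
    Measure.toSignedMeasure_add, add_comm]
  exact sub_eq_sub_iff_add_eq_add.1 hj

lemma le_of_add_eq_add_of_null {μ₁ μ₂ p q : Measure E} (h : μ₂ + p = μ₁ + q) {A : Set E}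
    (hpA : p A = 0) (hqA : q Aᶜ = 0) : p ≤ μ₁ := by
  refine Measure.le_iff'.2 fun B => ?_
  have hqB : q (B \ A) = 0 := measure_mono_null (fun _ hx => hx.2) hqA
  calc p B = p (B \ A) := (measure_sdiff_null hpA).symm
    _ ≤ (μ₂ + p) (B \ A) := by rw [Measure.add_apply]; exact le_add_self
    _ = μ₁ (B \ A) := by rw [h, Measure.add_apply, hqB, add_zero]
    _ ≤ μ₁ B := measure_mono sdiff_subset

lemma integral_sub_integral_eq_of_add_eq_add {μ₁ μ₂ p q : Measure E} (h : μ₂ + p = μ₁ + q)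
    {f : E → ℝ} (h₁ : Integrable f μ₁) (h₂ : Integrable f μ₂) (hp : Integrable f p)
    (hq : Integrable f q) : (∫ x, f x ∂μ₁) - ∫ x, f x ∂μ₂ = (∫ x, f x ∂p) - ∫ x, f x ∂q := by
  have := congrArg (fun ρ => ∫ x, f x ∂ρ) h
  simp only [integral_add_measure h₂ hp, integral_add_measure h₁ hq] at this
  linarith

/-- Integrating the oscillation bound against `p ⊗ q` compares `∫ F dp` with `∫ F dq`. -/
lemma abs_integral_sub_le_of_oscillation {p q : Measure E} [IsFiniteMeasure p]
    [IsFiniteMeasure q] (hpq : p univ = q univ) {F : E → ℝ} (hFp : Integrable F p)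
    (hFq : Integrable F q) (hWp : Integrable W p) (hWq : Integrable W q) {γ : ℝ}
    (hosc : ∀ x y, |F x - F y| ≤ γ * (W x + W y)) :
    |(∫ x, F x ∂p) - ∫ x, F x ∂q| ≤ γ * ((∫ x, W x ∂p) + ∫ x, W x ∂q) := by
  set c := p.real univ
  have hqc : q.real univ = c := by simp only [c, measureReal_def, hpq]
  have hc : c * |(∫ x, F x ∂p) - ∫ x, F x ∂q|
      ≤ c * (γ * ((∫ x, W x ∂p) + ∫ x, W x ∂q)) := by
    calc c * |(∫ x, F x ∂p) - ∫ x, F x ∂q| = |∫ z, (F z.1 - F z.2) ∂p.prod q| := by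
          rw [integral_sub (hFp.comp_fst q) (hFq.comp_snd p), integral_fun_fst,
            integral_fun_snd, hqc, smul_eq_mul, smul_eq_mul, ← mul_sub, abs_mul,
            abs_of_nonneg measureReal_nonneg]
      _ ≤ ∫ z, γ * (W z.1 + W z.2) ∂p.prod q :=
          (Real.norm_eq_abs _).symm.trans_le <| norm_integral_le_of_norm_le
            (g := fun z : E × E => γ * (W z.1 + W z.2))
            (((hWp.comp_fst q).add (hWq.comp_snd p)).const_mul γ)
            (.of_forall fun z => (Real.norm_eq_abs _).trans_le (hosc z.1 z.2))
      _ = c * (γ * ((∫ x, W x ∂p) + ∫ x, W x ∂q)) := by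
          rw [integral_const_mul, integral_add (hWp.comp_fst q) (hWq.comp_snd p),
            integral_fun_fst, integral_fun_snd, hqc, smul_eq_mul, smul_eq_mul]
          ring
  rcases measureReal_nonneg.lt_or_eq with hpos | hzero
  · exact le_of_mul_le_mul_left hc hpos
  · have hp : p = 0 := Measure.measure_univ_eq_zero.1 ((measureReal_eq_zero_iff).1 hzero.symm)
    have hq : q = 0 := Measure.measure_univ_eq_zero.1 (hpq ▸ Measure.measure_univ_eq_zero.2 hp)
    simp [hp, hq]

lemma integral_add_integral_le_vDist (hWm : Measurable W) {μ₁ μ₂ p q : Measure E}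
    (hμ₁ : ∫⁻ x, ENNReal.ofReal (W x) ∂μ₁ < ∞) (hμ₂ : ∫⁻ x, ENNReal.ofReal (W x) ∂μ₂ < ∞)
    (h : μ₂ + p = μ₁ + q) (hp : p ≤ μ₁) (hq : q ≤ μ₂) {A : Set E} (hA : MeasurableSet A)
    (hpA : p A = 0) (hqA : q Aᶜ = 0) (hWnn : ∀ x, 0 ≤ W x) :
    (∫ x, W x ∂p) + ∫ x, W x ∂q ≤ vDist W μ₁ μ₂ := by
  classical
  set f : E → ℝ := A.piecewise (fun x => -W x) W
  have hfm : Measurable f := hWm.neg.piecewise hA hWm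
  have hfW : ∀ x, |f x| ≤ W x := fun x => by
    by_cases hx : x ∈ A <;> simp [f, hx, abs_of_nonneg (hWnn x)]
  have hint : ∀ ρ, ∫⁻ x, ENNReal.ofReal (W x) ∂ρ < ∞ → Integrable f ρ := fun ρ hρ =>
    integrable_of_abs_le hWm hfm.aestronglyMeasurable hfW hρ
  have hfp : ∫ x, f x ∂p = ∫ x, W x ∂p :=
    integral_congr_ae ((measure_eq_zero_iff_ae_notMem.1 hpA).mono fun x hx => by simp [f, hx])
  have hfq : ∫ x, f x ∂q = -∫ x, W x ∂q := by
    rw [← integral_neg]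
    exact integral_congr_ae ((measure_eq_zero_iff_ae_notMem.1 hqA).mono fun x hx => by
      simp_all [f])
  calc (∫ x, W x ∂p) + ∫ x, W x ∂q = (∫ x, f x ∂μ₁) - ∫ x, f x ∂μ₂ := by
        rw [integral_sub_integral_eq_of_add_eq_add h (hint _ hμ₁) (hint _ hμ₂)
          (hint _ ((lintegral_mono' hp le_rfl).trans_lt hμ₁))
          (hint _ ((lintegral_mono' hq le_rfl).trans_lt hμ₂)), hfp, hfq, sub_neg_eq_add]
    _ ≤ vDist W μ₁ μ₂ := (le_abs_self _).trans (le_vDist hμ₁ hμ₂ hfm hfW)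

lemma isVDistLipschitz_of_oscillation (hκ : Measurable κ) (hWm : Measurable W)
    (hWnn : ∀ x, 0 ≤ W x) {C : ℝ} (hC : 0 ≤ C)
    (hdrift : ∀ x, ∫⁻ y, ENNReal.ofReal (W y) ∂κ x ≤ ENNReal.ofReal (C * W x))
    {γ : ℝ} (hγ : 0 ≤ γ)
    (hosc : ∀ f : E → ℝ, Measurable f → (∀ x, |f x| ≤ W x) →
      ∀ x y, |(∫ z, f z ∂κ x) - ∫ z, f z ∂κ y| ≤ γ * (W x + W y)) :
    IsVDistLipschitz W κ γ := by
  intro μ₁ μ₂ _ _ hμ₁ hμ₂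
  obtain ⟨p, q, _, _, hadd, A, hA, hpA, hqA⟩ := exists_add_eq_add_mutuallySingular μ₁ μ₂
  have hp : p ≤ μ₁ := le_of_add_eq_add_of_null hadd hpA hqA
  have hq : q ≤ μ₂ := le_of_add_eq_add_of_null hadd.symm hqA (by rwa [compl_compl])
  have hmass : p univ = q univ := by
    have := congrArg (· univ) hadd
    simp only [Measure.add_apply, measure_univ] at this
    exact (ENNReal.add_right_inj ENNReal.one_ne_top).1 this
  have hpW := (lintegral_mono' hp le_rfl).trans_lt hμ₁
  have hqW := (lintegral_mono' hq le_rfl).trans_lt hμ₂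
  have hWint : ∀ ρ : Measure E, ∫⁻ x, ENNReal.ofReal (W x) ∂ρ < ∞ → Integrable W ρ :=
    fun ρ hρ => integrable_of_abs_le hWm hWm.aestronglyMeasurable
      (fun x => (abs_of_nonneg (hWnn x)).le) hρ
  refine vDist_le hWnn fun f hfm hfW => ?_
  have hFint : ∀ ρ : Measure E, ∫⁻ x, ENNReal.ofReal (W x) ∂ρ < ∞ →
      Integrable (fun x => ∫ y, f y ∂κ x) ρ := fun ρ hρ =>
    integrable_integral_bind hκ (integrable_of_abs_le hWm hfm.aestronglyMeasurable hfW
      (lintegral_bind_lt_top_of_drift hκ hWm hC hdrift hρ))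
  rw [integral_bind_sub_integral_bind hκ hWm hC hdrift hμ₁ hμ₂ hfm hfW,
    integral_sub_integral_eq_of_add_eq_add hadd (hFint _ hμ₁) (hFint _ hμ₂) (hFint _ hpW)
      (hFint _ hqW)]
  calc _ ≤ γ * ((∫ x, W x ∂p) + ∫ x, W x ∂q) :=
        abs_integral_sub_le_of_oscillation hmass (hFint _ hpW) (hFint _ hqW) (hWint _ hpW)
          (hWint _ hqW) (hosc f hfm hfW)
    _ ≤ γ * vDist W μ₁ μ₂ := mul_le_mul_of_nonneg_left
        (integral_add_integral_le_vDist hWm hμ₁ hμ₂ hadd hp hq hA hpA hqA hWnn) hγ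

variable {V : E → ℝ} {δ : ℝ}

lemma lintegral_weight_le (hVm : Measurable V) (hVnn : ∀ x, 0 ≤ V x) (hδ0 : 0 ≤ δ)
    (hδ1 : δ ≤ 1) {ρ : Measure E} {a B : ℝ} (ha : 0 ≤ a) (hB : 0 ≤ B)
    (hρa : ρ univ ≤ ENNReal.ofReal a) (hρB : ∫⁻ x, ENNReal.ofReal (V x) ∂ρ ≤ ENNReal.ofReal B) :
    ∫⁻ x, ENNReal.ofReal (1 - δ + δ * V x) ∂ρ ≤ ENNReal.ofReal ((1 - δ) * a + δ * B) := by
  have hsplit : ∀ x, ENNReal.ofReal (1 - δ + δ * V x)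
      = ENNReal.ofReal (1 - δ) + ENNReal.ofReal δ * ENNReal.ofReal (V x) := fun x => by
    rw [ENNReal.ofReal_add (by linarith) (mul_nonneg hδ0 (hVnn x)), ENNReal.ofReal_mul hδ0]
  simp only [hsplit]
  rw [lintegral_add_left measurable_const, lintegral_const_mul _ hVm.ennreal_ofReal,
    lintegral_const, ENNReal.ofReal_add (mul_nonneg (by linarith) ha) (mul_nonneg hδ0 hB),
    ENNReal.ofReal_mul (by linarith), ENNReal.ofReal_mul hδ0]
  gcongr

lemma lintegral_weight_le_of_prob (hVm : Measurable V) (hVnn : ∀ x, 0 ≤ V x) (hδ0 : 0 ≤ δ)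
    (hδ1 : δ ≤ 1) {ρ : Measure E} [IsProbabilityMeasure ρ] {B : ℝ} (hB : 0 ≤ B)
    (hρB : ∫⁻ x, ENNReal.ofReal (V x) ∂ρ ≤ ENNReal.ofReal B) :
    ∫⁻ x, ENNReal.ofReal (1 - δ + δ * V x) ∂ρ ≤ ENNReal.ofReal (1 - δ + δ * B) := by
  simpa using lintegral_weight_le hVm hVnn hδ0 hδ1 zero_le_one hB (by simp) hρB

lemma lintegral_weight_le_mul (hVm : Measurable V) (hVnn : ∀ x, 0 ≤ V x) (hδ0 : 0 ≤ δ)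
    (hδ1 : δ ≤ 1) {ρ : Measure E} [IsProbabilityMeasure ρ] {K v : ℝ} (hK : 1 ≤ K) (hv : 0 ≤ v)
    (hρ : ∫⁻ x, ENNReal.ofReal (V x) ∂ρ ≤ ENNReal.ofReal (K * v)) :
    ∫⁻ x, ENNReal.ofReal (1 - δ + δ * V x) ∂ρ ≤ ENNReal.ofReal (K * (1 - δ + δ * v)) :=
  (lintegral_weight_le_of_prob hVm hVnn hδ0 hδ1 (by nlinarith) hρ).trans
    (ENNReal.ofReal_le_ofReal (by nlinarith))

lemma abs_integral_sub_le_of_le {ρ σ : Measure E} [IsProbabilityMeasure ρ] [IsFiniteMeasure σ]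
    (hσρ : σ ≤ ρ) {η : ℝ} (hη : 0 ≤ η) (hσ : σ univ = ENNReal.ofReal η)
    (hVm : Measurable V) (hVnn : ∀ x, 0 ≤ V x) (hδ0 : 0 ≤ δ) (hδ1 : δ ≤ 1) (hη1 : η ≤ 1)
    {B : ℝ} (hB : 0 ≤ B) (hρB : ∫⁻ x, ENNReal.ofReal (V x) ∂ρ ≤ ENNReal.ofReal B)
    {f : E → ℝ} (hfW : ∀ x, |f x| ≤ 1 - δ + δ * V x) :
    |∫ x, f x ∂(ρ - σ)| ≤ (1 - δ) * (1 - η) + δ * B := by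
  refine abs_integral_le_of_abs_le hfW (by nlinarith) ?_
  refine lintegral_weight_le hVm hVnn hδ0 hδ1 (by linarith) hB ?_
    ((lintegral_mono' Measure.sub_le le_rfl).trans hρB)
  rw [Measure.sub_apply MeasurableSet.univ hσρ, measure_univ, hσ, ENNReal.ofReal_sub 1 hη,
    ENNReal.ofReal_one]

/-- With `η' = min η 1`, `δ` is small enough that the drift term `δ (λ R + b)` uses at most half
of `η'`, and `γ` dominates `λ`, the rate at `S = R` and `1 - η' / 2`. -/
lemma exists_hairerMattingly_constants {lam b R η : ℝ} (hlam0 : 0 < lam) (hlam1 : lam < 1)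
    (hb : 0 ≤ b) (hR : 2 * b / (1 - lam) < R) (hη : 0 < η) :
    ∃ δ ∈ Ioo (0:ℝ) 1, ∃ γ ∈ Ioo (0:ℝ) 1,
      (∀ S, R ≤ S → 2 * (1 - δ) + δ * (lam * S + 2 * b) ≤ γ * (2 * (1 - δ) + δ * S)) ∧
      (1 - δ) * (1 - η) + δ * (lam * R + b) ≤ γ := by
  have hRlam : lam * R + 2 * b < R := by
    have := (div_lt_iff₀ (by linarith : (0:ℝ) < 1 - lam)).1 hR
    linarith
  have hR0 : 0 < R := (div_nonneg (by linarith) (by linarith)).trans_lt hR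
  have hRb : 0 < lam * R + b := by positivity
  set η' := min η 1
  have hη' : 0 < η' := lt_min hη one_pos
  set δ := min (1 / 2) (η' / (2 * (lam * R + b)))
  have hδ0 : 0 < δ := lt_min (by norm_num) (by positivity)
  have hδ1 : δ ≤ 1 / 2 := min_le_left _ _
  have hδη : δ * (lam * R + b) ≤ η' / 2 := by
    calc δ * (lam * R + b) ≤ η' / (2 * (lam * R + b)) * (lam * R + b) :=
          mul_le_mul_of_nonneg_right (min_le_right _ _) hRb.le
      _ = η' / 2 := by field_simp
  have hden : 0 < 2 * (1 - δ) + δ * R := by nlinarith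
  set r := (2 * (1 - δ) + δ * (lam * R + 2 * b)) / (2 * (1 - δ) + δ * R)
  have hr1 : r < 1 := (div_lt_one hden).2 (by nlinarith)
  have hrR : 2 * (1 - δ) + δ * (lam * R + 2 * b) = r * (2 * (1 - δ) + δ * R) := by
    rw [div_mul_cancel₀ _ hden.ne']
  refine ⟨δ, ⟨hδ0, by linarith⟩, max (max lam r) (1 - η' / 2),
    ⟨lt_max_of_lt_left (lt_max_of_lt_left hlam0), max_lt (max_lt hlam1 hr1) (by linarith)⟩,
    fun S hS => ?_, ?_⟩
  · have hlamγ : lam ≤ max (max lam r) (1 - η' / 2) := (le_max_left _ _).trans (le_max_left _ _)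
    have hrγ : r ≤ max (max lam r) (1 - η' / 2) := (le_max_right _ _).trans (le_max_left _ _)
    nlinarith [mul_le_mul_of_nonneg_right hrγ hden.le,
      mul_le_mul_of_nonneg_right hlamγ (mul_nonneg hδ0.le (sub_nonneg.2 hS))]
  · have : (1 - δ) * (1 - η) ≤ 1 - η' := by
      rcases le_total η 1 with h | h
      · have : η' = η := min_eq_left h
        nlinarith
      · have : η' = 1 := min_eq_right h
        nlinarith
    linarith [le_max_right (max lam r) (1 - η' / 2)]

section HairerMattingly

variable {P : E → Measure E} [∀ x, IsProbabilityMeasure (P x)] {lam b R γ : ℝ}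

lemma abs_integral_sub_le_of_large (hVm : Measurable V) (hVnn : ∀ x, 0 ≤ V x) (hlam : 0 ≤ lam)
    (hb : 0 ≤ b) (hdrift : ∀ x, ∫⁻ y, ENNReal.ofReal (V y) ∂P x ≤ ENNReal.ofReal (lam * V x + b))
    (hδ0 : 0 ≤ δ) (hδ1 : δ ≤ 1)
    (hlarge : ∀ S, R ≤ S → 2 * (1 - δ) + δ * (lam * S + 2 * b) ≤ γ * (2 * (1 - δ) + δ * S))
    {f : E → ℝ} (hfW : ∀ x, |f x| ≤ 1 - δ + δ * V x) {x y : E} (hxy : R ≤ V x + V y) :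
    |(∫ z, f z ∂P x) - ∫ z, f z ∂P y| ≤ γ * ((1 - δ + δ * V x) + (1 - δ + δ * V y)) := by
  have hB : ∀ z, 0 ≤ lam * V z + b := fun z => by nlinarith [hVnn z]
  calc _ ≤ (1 - δ + δ * (lam * V x + b)) + (1 - δ + δ * (lam * V y + b)) :=
        abs_integral_sub_le_add hfW (by nlinarith [hB x]) (by nlinarith [hB y])
          (lintegral_weight_le_of_prob hVm hVnn hδ0 hδ1 (hB x) (hdrift x))
          (lintegral_weight_le_of_prob hVm hVnn hδ0 hδ1 (hB y) (hdrift y))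
    _ = 2 * (1 - δ) + δ * (lam * (V x + V y) + 2 * b) := by ring
    _ ≤ γ * (2 * (1 - δ) + δ * (V x + V y)) := hlarge _ hxy
    _ = _ := by ring

/-- On `{V ≤ R}` every `P x` contains the common part `η ν`, which cancels in the difference. -/
lemma abs_integral_sub_le_of_small (hVm : Measurable V) (hV1 : ∀ x, 1 ≤ V x) (hlam : 0 ≤ lam)
    (hb : 0 ≤ b) (hdrift : ∀ x, ∫⁻ y, ENNReal.ofReal (V y) ∂P x ≤ ENNReal.ofReal (lam * V x + b))
    {η : ℝ} (hη0 : 0 ≤ η) {ν : Measure E} [IsProbabilityMeasure ν]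
    (hminor : ∀ x, V x ≤ R → ∀ s : Set E, ENNReal.ofReal η * ν s ≤ P x s)
    (hδ0 : 0 ≤ δ) (hδ1 : δ ≤ 1) (hγ : 0 ≤ γ) (hsmall : (1 - δ) * (1 - η) + δ * (lam * R + b) ≤ γ)
    {f : E → ℝ} (hfm : Measurable f) (hfW : ∀ x, |f x| ≤ 1 - δ + δ * V x) {x y : E}
    (hx : V x ≤ R) (hy : V y ≤ R) :
    |(∫ z, f z ∂P x) - ∫ z, f z ∂P y| ≤ γ * ((1 - δ + δ * V x) + (1 - δ + δ * V y)) := by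
  have hVnn : ∀ z, 0 ≤ V z := fun z => zero_le_one.trans (hV1 z)
  have hW1 : ∀ z, 1 ≤ 1 - δ + δ * V z := fun z => by nlinarith [hV1 z]
  have hη1 : η ≤ 1 := by
    simpa using hminor x hx univ
  set σ := ENNReal.ofReal η • ν
  have hσ : σ univ = ENNReal.ofReal η := by simp [σ]
  have : IsFiniteMeasure σ := ⟨hσ ▸ ENNReal.ofReal_lt_top⟩
  have hRB : 0 ≤ lam * R + b := by nlinarith [hV1 x]
  have hσP : ∀ z, V z ≤ R → σ ≤ P z := fun z hz => Measure.le_iff'.2 (hminor z hz)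
  have hsplit : ∀ z, V z ≤ R → ∫ w, f w ∂P z = (∫ w, f w ∂(P z - σ)) + ∫ w, f w ∂σ := by
    intro z hz
    have hint : Integrable f (P z) := integrable_of_abs_le
      (measurable_const.add (hVm.const_mul δ)) hfm.aestronglyMeasurable hfW
      ((lintegral_weight_le_of_prob hVm hVnn hδ0 hδ1 (by nlinarith [hVnn z])
        (hdrift z)).trans_lt ENNReal.ofReal_lt_top)
    conv_lhs => rw [← Measure.sub_add_cancel_of_le (hσP z hz)]
    exact integral_add_measure (hint.mono_measure Measure.sub_le) (hint.mono_measure (hσP z hz))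
  have hres : ∀ z, V z ≤ R → |∫ w, f w ∂(P z - σ)| ≤ (1 - δ) * (1 - η) + δ * (lam * R + b) :=
    fun z hz => abs_integral_sub_le_of_le (hσP z hz) hη0 hσ hVm hVnn hδ0 hδ1 hη1 hRB
      ((hdrift z).trans (ENNReal.ofReal_le_ofReal (by nlinarith))) hfW
  rw [hsplit x hx, hsplit y hy, add_sub_add_right_eq_sub]
  calc _ ≤ ((1 - δ) * (1 - η) + δ * (lam * R + b)) + ((1 - δ) * (1 - η) + δ * (lam * R + b)) :=
        (abs_sub _ _).trans (add_le_add (hres x hx) (hres y hy))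
    _ ≤ γ * 2 := by linarith
    _ ≤ _ := by nlinarith [hW1 x, hW1 y]

lemma abs_integral_sub_le_of_drift_minorization (hVm : Measurable V) (hV1 : ∀ x, 1 ≤ V x)
    (hlam : 0 ≤ lam) (hb : 0 ≤ b)
    (hdrift : ∀ x, ∫⁻ y, ENNReal.ofReal (V y) ∂P x ≤ ENNReal.ofReal (lam * V x + b))
    {η : ℝ} (hη0 : 0 ≤ η) {ν : Measure E} [IsProbabilityMeasure ν]
    (hminor : ∀ x, V x ≤ R → ∀ s : Set E, ENNReal.ofReal η * ν s ≤ P x s)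
    (hδ0 : 0 ≤ δ) (hδ1 : δ ≤ 1) (hγ : 0 ≤ γ)
    (hlarge : ∀ S, R ≤ S → 2 * (1 - δ) + δ * (lam * S + 2 * b) ≤ γ * (2 * (1 - δ) + δ * S))
    (hsmall : (1 - δ) * (1 - η) + δ * (lam * R + b) ≤ γ)
    {f : E → ℝ} (hfm : Measurable f) (hfW : ∀ x, |f x| ≤ 1 - δ + δ * V x) (x y : E) :
    |(∫ z, f z ∂P x) - ∫ z, f z ∂P y| ≤ γ * ((1 - δ + δ * V x) + (1 - δ + δ * V y)) := by
  by_cases hxy : R ≤ V x + V y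
  · exact abs_integral_sub_le_of_large hVm (fun z => zero_le_one.trans (hV1 z)) hlam hb hdrift
      hδ0 hδ1 hlarge hfW hxy
  · exact abs_integral_sub_le_of_small hVm hV1 hlam hb hdrift hη0 hminor hδ0 hδ1 hγ hsmall
      hfm hfW (by linarith [hV1 y]) (by linarith [hV1 x])

lemma isVDistLipschitz_of_drift_minorization (hVm : Measurable V) (hV1 : ∀ x, 1 ≤ V x)
    (hP : Measurable P) (hlam0 : 0 ≤ lam) (hlam1 : lam ≤ 1) (hb : 0 ≤ b)
    (hdrift : ∀ x, ∫⁻ y, ENNReal.ofReal (V y) ∂P x ≤ ENNReal.ofReal (lam * V x + b))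
    {η : ℝ} (hη0 : 0 ≤ η) {ν : Measure E} [IsProbabilityMeasure ν]
    (hminor : ∀ x, V x ≤ R → ∀ s : Set E, ENNReal.ofReal η * ν s ≤ P x s)
    (hδ0 : 0 ≤ δ) (hδ1 : δ ≤ 1) (hγ : 0 ≤ γ)
    (hlarge : ∀ S, R ≤ S → 2 * (1 - δ) + δ * (lam * S + 2 * b) ≤ γ * (2 * (1 - δ) + δ * S))
    (hsmall : (1 - δ) * (1 - η) + δ * (lam * R + b) ≤ γ) :
    IsVDistLipschitz (fun x => 1 - δ + δ * V x) P γ := by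
  have hVnn : ∀ x, 0 ≤ V x := fun x => zero_le_one.trans (hV1 x)
  have hW1 : ∀ x, 1 ≤ 1 - δ + δ * V x := fun x => by nlinarith [hV1 x]
  refine isVDistLipschitz_of_oscillation (W := fun x => 1 - δ + δ * V x) hP
    (measurable_const.add (hVm.const_mul δ))
    (fun x => zero_le_one.trans (hW1 x)) (C := 1 + b) (by linarith) (fun x => ?_) hγ
    fun f hfm hfW x y => abs_integral_sub_le_of_drift_minorization hVm hV1 hlam0 hb hdrift hη0
      hminor hδ0 hδ1 hγ hlarge hsmall hfm hfW x y
  have hlamV : δ * (lam * V x) ≤ δ * V x := by gcongr; nlinarith [hVnn x]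
  have hδb : δ * b ≤ b * (1 - δ + δ * V x) := by
    nlinarith [mul_le_mul_of_nonneg_left (hW1 x) hb, mul_le_mul_of_nonneg_right hδ1 hb]
  exact (lintegral_weight_le_of_prob hVm hVnn hδ0 hδ1 (by nlinarith [hVnn x]) (hdrift x)).trans
    (ENNReal.ofReal_le_ofReal (by linarith))

end HairerMattingly

/-- Since `δ V ≤ 1 - δ + δ V ≤ V`, a Lipschitz bound in the weight `1 - δ + δ V` costs a factor
`δ⁻¹` in the weight `V`. -/
lemma vDist_bind_le_of_isVDistLipschitz (hVm : Measurable V) (hV1 : ∀ x, 1 ≤ V x) (hδ0 : 0 < δ)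
    (hδ1 : δ ≤ 1) (hκ : Measurable κ) {C : ℝ} (hC : 0 ≤ C)
    (hdrift : ∀ x, ∫⁻ y, ENNReal.ofReal (1 - δ + δ * V y) ∂κ x
      ≤ ENNReal.ofReal (C * (1 - δ + δ * V x)))
    {c : ℝ} (hc : 0 ≤ c) (hlip : IsVDistLipschitz (fun x => 1 - δ + δ * V x) κ c)
    {μ₁ μ₂ : Measure E} [IsProbabilityMeasure μ₁] [IsProbabilityMeasure μ₂]
    (hμ₁ : ∫⁻ x, ENNReal.ofReal (V x) ∂μ₁ < ∞) (hμ₂ : ∫⁻ x, ENNReal.ofReal (V x) ∂μ₂ < ∞) :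
    vDist V (μ₁.bind κ) (μ₂.bind κ) ≤ δ⁻¹ * c * vDist V μ₁ μ₂ := by
  have hWm : Measurable fun x => 1 - δ + δ * V x := measurable_const.add (hVm.const_mul δ)
  have hWV : ∀ x, 1 - δ + δ * V x ≤ 1 * V x := fun x => by nlinarith [hV1 x]
  have hVW : ∀ x, V x ≤ δ⁻¹ * (1 - δ + δ * V x) := fun x => by
    rw [le_inv_mul_iff₀ hδ0]; linarith
  have hWnn : ∀ x, 0 ≤ 1 - δ + δ * V x := fun x => by nlinarith [hV1 x]
  have hWμ : ∀ μ : Measure E, ∫⁻ x, ENNReal.ofReal (V x) ∂μ < ∞ →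
      ∫⁻ x, ENNReal.ofReal (1 - δ + δ * V x) ∂μ < ∞ := fun μ hμ =>
    (lintegral_mono fun x => ENNReal.ofReal_le_ofReal (by simpa using hWV x)).trans_lt hμ
  calc vDist V (μ₁.bind κ) (μ₂.bind κ)
      ≤ δ⁻¹ * vDist (fun x => 1 - δ + δ * V x) (μ₁.bind κ) (μ₂.bind κ) :=
        vDist_le_mul_vDist (fun x => zero_le_one.trans (hV1 x)) (inv_pos.2 hδ0) hVW
          (lintegral_bind_lt_top_of_drift hκ hWm hC hdrift (hWμ _ hμ₁))
          (lintegral_bind_lt_top_of_drift hκ hWm hC hdrift (hWμ _ hμ₂))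
    _ ≤ δ⁻¹ * (c * (1 * vDist V μ₁ μ₂)) := by
        gcongr
        exact (hlip _ _ ‹_› ‹_› (hWμ _ hμ₁) (hWμ _ hμ₂)).trans (mul_le_mul_of_nonneg_left
          (vDist_le_mul_vDist hWnn one_pos hWV hμ₁ hμ₂) hc)
    _ = δ⁻¹ * c * vDist V μ₁ μ₂ := by ring

lemma one_le_of_lintegral_le (hV1 : ∀ x, 1 ≤ V x) {μ : Measure E} [IsProbabilityMeasure μ]
    {M : ℝ} (hM : ∫⁻ x, ENNReal.ofReal (V x) ∂μ ≤ ENNReal.ofReal M) : 1 ≤ M := by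
  refine ENNReal.one_le_ofReal.1 (le_trans ?_ hM)
  calc (1 : ℝ≥0∞) = ∫⁻ _, 1 ∂μ := by simp
    _ ≤ _ := lintegral_mono fun x => ENNReal.one_le_ofReal.2 (hV1 x)

lemma betaV_le_of_forall_le (hVm : Measurable V) (hVnn : ∀ x, 0 ≤ V x)
    {Q : ℝ → E → Measure E} {πn : ℕ → ℤ → Measure E} {n j : ℕ}
    (hπ : ∀ k, IsProbabilityMeasure (πn n k)) {M : ℝ}
    (hM : ∀ k : ℤ, k ≤ n → ∫⁻ x, ENNReal.ofReal (V x) ∂πn n k ≤ ENNReal.ofReal M)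
    (hM0 : 0 ≤ M) {c : ℝ} (hc : 0 ≤ c)
    (h : ∀ k : ℤ, k ≤ n → ∀ x, vDist V (tvstep Q n (k - j) j x) (πn n k) ≤ c * (V x + M)) :
    betaV V Q πn n j ≤ c * (2 * M) := by
  have : Nonempty {k : ℤ // k ≤ n} := ⟨⟨0, n.cast_nonneg⟩⟩
  refine ciSup_le fun ⟨k, hk⟩ => ?_
  have hkj : k - j ≤ n := by omega
  have hVint : Integrable V (πn n (k - j)) := integrable_of_abs_le hVm
    hVm.aestronglyMeasurable (fun x => (abs_of_nonneg (hVnn x)).le)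
    ((hM _ hkj).trans_lt ENNReal.ofReal_lt_top)
  have hVM : ∫ x, V x ∂πn n (k - j) ≤ M :=
    (le_abs_self _).trans (abs_integral_le_of_abs_le (fun x => (abs_of_nonneg (hVnn x)).le)
      hM0 (hM _ hkj))
  calc _ ≤ ∫ x, c * (V x + M) ∂πn n (k - j) :=
        integral_mono_of_nonneg (.of_forall fun _ => vDist_nonneg _ _)
          ((hVint.add (integrable_const M)).const_mul c) (.of_forall (h k hk))
    _ = c * ((∫ x, V x ∂πn n (k - j)) + M) := by
        rw [integral_const_mul, integral_add hVint (integrable_const M), integral_const,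
          probReal_univ, one_smul]
    _ ≤ c * (2 * M) := by gcongr; linarith

end VDist

section Chain

open VDist

variable {Q : ℝ → E → Measure E} {W : E → ℝ}

lemma seqStep_nil : seqStep Q [] = Measure.dirac := rfl

lemma seqStep_cons (u : ℝ) (l : List ℝ) (x : E) :
    seqStep Q (u :: l) x = (Q u x).bind (seqStep Q l) := rfl

lemma measurable_seqStep (hQ : ∀ u, Measurable (Q u)) : ∀ l, Measurable (seqStep Q l)
  | [] => Measure.measurable_dirac
  | u :: l => (Measure.measurable_bind' (measurable_seqStep hQ l)).comp (hQ u)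

lemma isProbabilityMeasure_seqStep (hQ : ∀ u, Measurable (Q u))
    (hQp : ∀ u x, IsProbabilityMeasure (Q u x)) : ∀ l x, IsProbabilityMeasure (seqStep Q l x)
  | [], _ => Measure.dirac.isProbabilityMeasure
  | _ :: l, _ => isProbabilityMeasure_bind (measurable_seqStep hQ l).aemeasurable
      (.of_forall (isProbabilityMeasure_seqStep hQ hQp l))

lemma seqStep_append (hQ : ∀ u, Measurable (Q u)) (l₁ l₂ : List ℝ) (x : E) :
    seqStep Q (l₁ ++ l₂) x = (seqStep Q l₁ x).bind (seqStep Q l₂) := by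
  induction l₁ generalizing x with
  | nil => rw [List.nil_append, seqStep_nil, Measure.dirac_bind (measurable_seqStep hQ _)]
  | cons u l₁ ih =>
    rw [List.cons_append, seqStep_cons, seqStep_cons, funext ih,
      Measure.bind_bind (measurable_seqStep hQ l₁).aemeasurable
        (measurable_seqStep hQ l₂).aemeasurable]

lemma seqStep_singleton (u : ℝ) : seqStep Q [u] = Q u := by
  funext x
  rw [seqStep_cons, seqStep_nil, Measure.bind_dirac]

lemma lintegral_seqStep_le (hQ : ∀ u, Measurable (Q u)) (hWm : Measurable W) {K : ℝ}
    (hK : 0 ≤ K) {l : List ℝ}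
    (hdrift : ∀ u ∈ l, ∀ x, ∫⁻ y, ENNReal.ofReal (W y) ∂Q u x ≤ ENNReal.ofReal (K * W x))
    (x : E) :
    ∫⁻ y, ENNReal.ofReal (W y) ∂seqStep Q l x ≤ ENNReal.ofReal (K ^ l.length * W x) := by
  induction l generalizing x with
  | nil => simp [seqStep_nil, lintegral_dirac' x hWm.ennreal_ofReal]
  | cons u l ih =>
    rw [seqStep_cons]
    calc _ ≤ ENNReal.ofReal (K ^ l.length) * ∫⁻ y, ENNReal.ofReal (W y) ∂Q u x :=
          lintegral_bind_le_of_drift (measurable_seqStep hQ l) hWm (pow_nonneg hK _)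
            (ih fun v hv => hdrift v (List.mem_cons_of_mem u hv)) _
      _ ≤ ENNReal.ofReal (K ^ l.length) * ENNReal.ofReal (K * W x) := by
          gcongr
          exact hdrift u List.mem_cons_self x
      _ = _ := by rw [← ENNReal.ofReal_mul (pow_nonneg hK _), List.length_cons, pow_succ,
            mul_assoc]

lemma isVDistLipschitz_seqStep_append (hQ : ∀ u, Measurable (Q u))
    (hQp : ∀ u x, IsProbabilityMeasure (Q u x)) (hWm : Measurable W) {K : ℝ} (hK : 0 ≤ K)
    {l₁ l₂ : List ℝ}
    (hdrift : ∀ u ∈ l₁, ∀ x, ∫⁻ y, ENNReal.ofReal (W y) ∂Q u x ≤ ENNReal.ofReal (K * W x))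
    {c₁ c₂ : ℝ} (h₁ : IsVDistLipschitz W (seqStep Q l₁) c₁)
    (h₂ : IsVDistLipschitz W (seqStep Q l₂) c₂) (hc₂ : 0 ≤ c₂) :
    IsVDistLipschitz W (seqStep Q (l₁ ++ l₂)) (c₂ * c₁) := by
  rw [funext (seqStep_append hQ l₁ l₂)]
  exact h₁.bind h₂ hc₂ (measurable_seqStep hQ _) (measurable_seqStep hQ _)
    (isProbabilityMeasure_seqStep hQ hQp _) hWm (pow_nonneg hK _)
    (lintegral_seqStep_le hQ hWm hK hdrift)

lemma isVDistLipschitz_seqStep (hQ : ∀ u, Measurable (Q u))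
    (hQp : ∀ u x, IsProbabilityMeasure (Q u x)) (hWm : Measurable W) (hWnn : ∀ x, 0 ≤ W x)
    {K : ℝ} (hK : 0 < K) {l : List ℝ}
    (hdrift : ∀ u ∈ l, ∀ x, ∫⁻ y, ENNReal.ofReal (W y) ∂Q u x ≤ ENNReal.ofReal (K * W x)) :
    IsVDistLipschitz W (seqStep Q l) (K ^ l.length) := by
  induction l with
  | nil => exact isVDistLipschitz_dirac
  | cons u l ih =>
    have hu := hdrift u List.mem_cons_self
    have hstep := isVDistLipschitz_seqStep_append hQ hQp hWm hK.le (l₁ := [u])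
      (by simpa using hu) (seqStep_singleton (Q := Q) u ▸
        isVDistLipschitz_of_drift (hQ u) hWm hWnn hK hu)
      (ih fun v hv => hdrift v (List.mem_cons_of_mem u hv)) (pow_nonneg hK.le _)
    rwa [List.singleton_append, ← pow_succ] at hstep

/-- The time `(i + 1 + t) / n` of the `t`-th transition after time `i`, clamped at `0`: times
before the start of the array only enter through `Q_u = Q_0` for `u ≤ 0`. -/
def gridTime (n : ℕ) (i : ℤ) (t : ℕ) : ℝ := max ((i + 1 + t) / n) 0

def timeGrid (n : ℕ) (i : ℤ) (c : ℕ) : List ℝ := List.ofFn fun t : Fin c => gridTime n i t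

lemma timeGrid_add (n : ℕ) (i : ℤ) (c d : ℕ) :
    timeGrid n i (c + d) = timeGrid n i c ++ timeGrid n (i + c) d := by
  simp only [timeGrid, List.ofFn_add, gridTime, Fin.val_natAdd]
  congr 2
  funext t
  push_cast
  ring_nf

lemma timeGrid_one (n : ℕ) (i : ℤ) : timeGrid n i 1 = [gridTime n i 0] := rfl

lemma gridTime_mem_Icc {n : ℕ} {i : ℤ} {t : ℕ} (h : i + 1 + t ≤ n) : gridTime n i t ∈ Icc 0 1 :=
  ⟨le_max_right _ _, max_le (div_le_one_of_le₀ (by exact_mod_cast h) n.cast_nonneg) zero_le_one⟩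

lemma mem_Icc_of_mem_timeGrid {n : ℕ} {i : ℤ} {c : ℕ} (h : i + c ≤ n) {u : ℝ}
    (hu : u ∈ timeGrid n i c) : u ∈ Icc 0 1 := by
  obtain ⟨t, rfl⟩ := List.mem_ofFn.1 hu
  exact gridTime_mem_Icc (by omega)

lemma abs_gridTime_zero_sub_le (n : ℕ) (i : ℤ) (t : ℕ) :
    |gridTime n i 0 - gridTime n i t| ≤ t / n := by
  refine (abs_max_sub_max_le_abs _ _ _).trans_eq ?_
  rw [← sub_div, abs_div, Nat.abs_cast]
  congr 1
  simp [abs_of_nonneg]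

lemma mem_Icc_and_abs_gridTime_sub_le {n m : ℕ} {ε : ℝ} (hε : 0 < ε) (hn : (m : ℝ) / ε ≤ n)
    {i : ℤ} (hi : i + m ≤ n) (t : Fin m) :
    gridTime n i t ∈ Icc 0 1 ∧ |gridTime n i 0 - gridTime n i t| ≤ ε := by
  have hmn : (m : ℝ) / n ≤ ε :=
    div_le_of_le_mul₀ n.cast_nonneg hε.le (by rw [div_le_iff₀ hε] at hn; linarith)
  exact ⟨gridTime_mem_Icc (by omega), (abs_gridTime_zero_sub_le n i t).trans
    ((div_le_div_of_nonneg_right (by exact_mod_cast t.2.le) n.cast_nonneg).trans hmn)⟩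

lemma kernel_gridTime_zero (hQ0 : ∀ u ≤ (0:ℝ), Q u = Q 0) (n : ℕ) (i : ℤ) :
    Q (gridTime n i 0) = Q ((i + 1) / n) := by
  rw [gridTime, Nat.cast_zero, add_zero]
  rcases le_total ((i + 1 : ℝ) / n) 0 with h | h
  · rw [max_eq_right h, hQ0 _ h]
  · rw [max_eq_left h]

lemma tvstep_eq_seqStep_timeGrid (hQ0 : ∀ u ≤ (0:ℝ), Q u = Q 0) (n : ℕ) (i : ℤ) (c : ℕ) :
    tvstep Q n i c = seqStep Q (timeGrid n i c) := by
  induction c generalizing i with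
  | zero => rfl
  | succ c ih =>
    funext x
    change (Q ((i + 1) / n) x).bind (tvstep Q n (i + 1) c) = _
    rw [ih, add_comm c 1, timeGrid_add, timeGrid_one, List.singleton_append, seqStep_cons,
      kernel_gridTime_zero hQ0, Nat.cast_one]

lemma eq_bind_seqStep_timeGrid_of_rec (hQ : ∀ u, Measurable (Q u))
    (hQ0 : ∀ u ≤ (0:ℝ), Q u = Q 0) {π : ℤ → Measure E} {n : ℕ}
    (hrec : ∀ k : ℤ, k ≤ n → π k = (π (k - 1)).bind (Q (k / n))) (c : ℕ) {k : ℤ}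
    (hk : k ≤ n) : π k = (π (k - c)).bind (seqStep Q (timeGrid n (k - c) c)) := by
  induction c generalizing k with
  | zero => simp [timeGrid, seqStep_nil, Measure.bind_dirac]
  | succ c ih =>
    have hk' : k - 1 - c = k - (c + 1 : ℕ) := by push_cast; ring
    rw [hrec k hk, ih (k := k - 1) (by omega), hk', timeGrid_add, funext (seqStep_append hQ _ _),
      ← Measure.bind_bind (measurable_seqStep hQ _).aemeasurable
        (measurable_seqStep hQ _).aemeasurable, timeGrid_one, seqStep_singleton,
      kernel_gridTime_zero hQ0]
    congr 3
    push_cast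
    ring

lemma isVDistLipschitz_seqStep_timeGrid (hQ : ∀ u, Measurable (Q u))
    (hQp : ∀ u x, IsProbabilityMeasure (Q u x)) (hWm : Measurable W) (hWnn : ∀ x, 0 ≤ W x)
    {K : ℝ} (hK : 0 < K)
    (hdrift : ∀ u ∈ Icc (0:ℝ) 1, ∀ x,
      ∫⁻ y, ENNReal.ofReal (W y) ∂Q u x ≤ ENNReal.ofReal (K * W x))
    {n m : ℕ} {γ : ℝ} (hγ : 0 ≤ γ)
    (hblock : ∀ i : ℤ, i + m ≤ n → IsVDistLipschitz W (seqStep Q (timeGrid n i m)) γ)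
    (g s : ℕ) {i : ℤ} (hi : i + (m * g + s : ℕ) ≤ n) :
    IsVDistLipschitz W (seqStep Q (timeGrid n i (m * g + s))) (K ^ s * γ ^ g) := by
  induction g generalizing i with
  | zero =>
    have := isVDistLipschitz_seqStep hQ hQp hWm hWnn hK (l := timeGrid n i s)
      fun u hu => hdrift u (mem_Icc_of_mem_timeGrid (by simpa using hi) hu)
    simpa [timeGrid] using this
  | succ g ih =>
    rw [show m * (g + 1) + s = m + (m * g + s) by ring, timeGrid_add, pow_succ, ← mul_assoc]
    exact isVDistLipschitz_seqStep_append hQ hQp hWm hK.le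
      (fun u hu => hdrift u (mem_Icc_of_mem_timeGrid (by push_cast at hi ⊢; nlinarith) hu))
      (hblock i (by push_cast at hi ⊢; nlinarith))
      (ih (by push_cast at hi ⊢; nlinarith)) (by positivity)

lemma vDist_seqStep_timeGrid_le (hQ : ∀ u, Measurable (Q u))
    (hQp : ∀ u x, IsProbabilityMeasure (Q u x)) {V : E → ℝ} (hVm : Measurable V)
    (hV1 : ∀ x, 1 ≤ V x) {δ : ℝ} (hδ0 : 0 < δ) (hδ1 : δ ≤ 1) {K : ℝ} (hK : 0 < K)
    (hdrift : ∀ u ∈ Icc (0:ℝ) 1, ∀ x, ∫⁻ y, ENNReal.ofReal (1 - δ + δ * V y) ∂Q u x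
      ≤ ENNReal.ofReal (K * (1 - δ + δ * V x)))
    {n m : ℕ} {γ : ℝ} (hγ : 0 ≤ γ)
    (hblock : ∀ i : ℤ, i + m ≤ n →
      IsVDistLipschitz (fun x => 1 - δ + δ * V x) (seqStep Q (timeGrid n i m)) γ)
    (g s : ℕ) {i : ℤ} (hi : i + (m * g + s : ℕ) ≤ n) {π : Measure E} [IsProbabilityMeasure π]
    {M : ℝ} (hM0 : 0 ≤ M) (hπ : ∫⁻ x, ENNReal.ofReal (V x) ∂π ≤ ENNReal.ofReal M) (x : E) :
    vDist V (seqStep Q (timeGrid n i (m * g + s)) x)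
        (π.bind (seqStep Q (timeGrid n i (m * g + s))))
      ≤ δ⁻¹ * (K ^ s * γ ^ g) * (V x + M) := by
  have hVnn : ∀ x, 0 ≤ V x := fun x => zero_le_one.trans (hV1 x)
  have hWm : Measurable fun x => 1 - δ + δ * V x := measurable_const.add (hVm.const_mul δ)
  have hWnn : ∀ x, 0 ≤ 1 - δ + δ * V x := fun x => by nlinarith [hV1 x]
  have hdirac : ∫⁻ y, ENNReal.ofReal (V y) ∂Measure.dirac x = ENNReal.ofReal (V x) :=
    lintegral_dirac' x hVm.ennreal_ofReal
  rw [← Measure.dirac_bind (measurable_seqStep hQ _) x]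
  calc _ ≤ δ⁻¹ * (K ^ s * γ ^ g) * vDist V (Measure.dirac x) π :=
        vDist_bind_le_of_isVDistLipschitz hVm hV1 hδ0 hδ1 (measurable_seqStep hQ _)
          (by positivity)
          (lintegral_seqStep_le hQ hWm hK.le fun u hu => hdrift u (mem_Icc_of_mem_timeGrid hi hu))
          (by positivity)
          (isVDistLipschitz_seqStep_timeGrid hQ hQp hWm hWnn hK hdrift hγ hblock g s hi)
          (hdirac ▸ ENNReal.ofReal_lt_top) (hπ.trans_lt ENNReal.ofReal_lt_top)
    _ ≤ _ := by
        gcongr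
        exact vDist_le_add hVnn (hVnn x) hM0 hdirac.le hπ

end Chain

theorem statement18_general
    {E : Type*} [MeasurableSpace E]
    (Q : ℝ → E → Measure E)
    (hQmeas : ∀ u, Measurable (Q u))
    (hQprob : ∀ u x, IsProbabilityMeasure (Q u x))
    (V : E → ℝ) (hVmeas : Measurable V) (hV1 : ∀ x, 1 ≤ V x)
    -- Assumption F1
    (ε lam b K : ℝ) (m : ℕ)
    (hε : 0 < ε) (hlam : lam ∈ Set.Ioo (0:ℝ) 1) (hb : 0 < b) (hK : 1 ≤ K)
    (hdrift1 : ∀ u ∈ Icc (0:ℝ) 1, ∀ x,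
      (∫⁻ y, ENNReal.ofReal (V y) ∂(Q u x)) ≤ ENNReal.ofReal (K * V x))
    (hdriftm : ∀ u ∈ Icc (0:ℝ) 1, ∀ us : Fin m → ℝ,
      (∀ i, us i ∈ Icc (0:ℝ) 1 ∧ |u - us i| ≤ ε) → ∀ x,
      (∫⁻ y, ENNReal.ofReal (V y) ∂(seqStep Q (List.ofFn us) x))
        ≤ ENNReal.ofReal (lam * V x + b))
    (η R : ℝ) (hη : 0 < η) (hR : 2 * b / (1 - lam) < R)
    (ν : Measure E) (hν : IsProbabilityMeasure ν)
    (hminor : ∀ u ∈ Icc (0:ℝ) 1, ∀ us : Fin m → ℝ,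
      (∀ i, us i ∈ Icc (0:ℝ) 1 ∧ |u - us i| ≤ ε) → ∀ x, V x ≤ R →
      ∀ s : Set E, ENNReal.ofReal η * ν s ≤ seqStep Q (List.ofFn us) x s)
    -- convention Q_u = Q_0 for u < 0, and the triangular array of Markov chains
    (hQ0 : ∀ u ≤ (0:ℝ), Q u = Q 0)
    (πn : ℕ → ℤ → Measure E)
    (hπnprob : ∀ n k, IsProbabilityMeasure (πn n k))
    (hrec : ∀ (n : ℕ) (k : ℤ), k ≤ (n:ℤ) →
      πn n k = (πn n (k-1)).bind (Q ((k:ℝ)/(n:ℝ)))) :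
    ∃ δ ∈ Set.Ioo (0:ℝ) 1, ∃ γ ∈ Set.Ioo (0:ℝ) 1,
      -- δ, γ are the constants of the Hairer–Mattingly contraction lemma:
      -- Δ_{V_δ}(Q_{u₁}⋯Q_{u_m}) ≤ γ whenever |u_i − u| ≤ ε, where V_δ = 1 − δ + δV
      (∀ u ∈ Icc (0:ℝ) 1, ∀ us : Fin m → ℝ,
        (∀ i, us i ∈ Icc (0:ℝ) 1 ∧ |u - us i| ≤ ε) →
        ∀ μ₁ μ₂ : Measure E, IsProbabilityMeasure μ₁ → IsProbabilityMeasure μ₂ →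
          (∫⁻ x, ENNReal.ofReal (1 - δ + δ * V x) ∂μ₁) < ∞ →
          (∫⁻ x, ENNReal.ofReal (1 - δ + δ * V x) ∂μ₂) < ∞ →
          vDist (fun x => 1 - δ + δ * V x)
              (μ₁.bind (seqStep Q (List.ofFn us))) (μ₂.bind (seqStep Q (List.ofFn us)))
            ≤ γ * vDist (fun x => 1 - δ + δ * V x) μ₁ μ₂) ∧
      -- the bound on β^{(V)}_n(j) for n ≥ m/ε and j = mg + s
      (∀ n : ℕ, (m:ℝ)/ε ≤ (n:ℝ) →
        ∀ M : ℝ, (∀ k : ℤ, k ≤ (n:ℤ) →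
            (∫⁻ x, ENNReal.ofReal (V x) ∂(πn n k)) ≤ ENNReal.ofReal M) →
        ∀ (j g s : ℕ), j = m * g + s → s < m →
          betaV V Q πn n j ≤ 2 * δ⁻¹ * M * K ^ s * γ ^ g) := by
  open VDist in
  obtain ⟨hlam0, hlam1⟩ := hlam
  obtain ⟨δ, ⟨hδ0, hδ1⟩, γ, ⟨hγ0, hγ1⟩, hlarge, hsmall⟩ :=
    exists_hairerMattingly_constants hlam0 hlam1 hb.le hR hη
  have hVnn : ∀ x, 0 ≤ V x := fun x => zero_le_one.trans (hV1 x)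
  have hblock : ∀ u ∈ Icc (0:ℝ) 1, ∀ us : Fin m → ℝ,
      (∀ i, us i ∈ Icc (0:ℝ) 1 ∧ |u - us i| ≤ ε) →
      IsVDistLipschitz (fun x => 1 - δ + δ * V x) (seqStep Q (List.ofFn us)) γ :=
    fun u hu us hus =>
      haveI := isProbabilityMeasure_seqStep hQmeas hQprob (List.ofFn us)
      isVDistLipschitz_of_drift_minorization hVmeas hV1 (measurable_seqStep hQmeas _) hlam0.le
        hlam1.le hb.le (hdriftm u hu us hus) hη.le (hminor u hu us hus) hδ0.le hδ1.le hγ0.le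
        hlarge hsmall
  refine ⟨δ, ⟨hδ0, hδ1⟩, γ, ⟨hγ0, hγ1⟩, hblock, ?_⟩
  rintro n hn M hM j g s rfl hs
  have hM1 : 1 ≤ M := one_le_of_lintegral_le hV1 (hM 0 n.cast_nonneg)
  rw [show 2 * δ⁻¹ * M * K ^ s * γ ^ g = δ⁻¹ * (K ^ s * γ ^ g) * (2 * M) by ring]
  refine betaV_le_of_forall_le hVmeas hVnn (hπnprob n) hM (by linarith) (by positivity)
    fun k hk x => ?_
  rw [tvstep_eq_seqStep_timeGrid hQ0, eq_bind_seqStep_timeGrid_of_rec hQmeas hQ0 (hrec n) _ hk]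
  exact vDist_seqStep_timeGrid_le hQmeas hQprob hVmeas hV1 hδ0 hδ1.le (by linarith)
    (fun u hu x => lintegral_weight_le_mul hVmeas hVnn hδ0.le hδ1.le hK (hVnn x) (hdrift1 u hu x))
    hγ0.le (fun i hi => hblock _ (gridTime_mem_Icc (by omega)) _
      (mem_Icc_and_abs_gridTime_sub_le hε hn hi))
    g s (by omega) (by linarith) (hM _ (by omega)) x

theorem statement18
    {E : Type*} [MeasurableSpace E]
    (Q : ℝ → E → Measure E)
    (hQmeas : ∀ u, Measurable (Q u))
    (hQprob : ∀ u x, IsProbabilityMeasure (Q u x))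
    (V : E → ℝ) (hVmeas : Measurable V) (hV1 : ∀ x, 1 ≤ V x)
    -- Assumption F1
    (ε lam b K : ℝ) (m : ℕ)
    (hε : 0 < ε) (hlam : lam ∈ Set.Ioo (0:ℝ) 1) (hm : 1 ≤ m) (hb : 0 < b) (hK : 1 ≤ K)
    (hdrift1 : ∀ u ∈ Icc (0:ℝ) 1, ∀ x,
      (∫⁻ y, ENNReal.ofReal (V y) ∂(Q u x)) ≤ ENNReal.ofReal (K * V x))
    (hdriftm : ∀ u ∈ Icc (0:ℝ) 1, ∀ us : Fin m → ℝ,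
      (∀ i, us i ∈ Icc (0:ℝ) 1 ∧ |u - us i| ≤ ε) → ∀ x,
      (∫⁻ y, ENNReal.ofReal (V y) ∂(seqStep Q (List.ofFn us) x))
        ≤ ENNReal.ofReal (lam * V x + b))
    (η R : ℝ) (hη : 0 < η) (hR : 2 * b / (1 - lam) < R)
    (ν : Measure E) (hν : IsProbabilityMeasure ν)
    (hminor : ∀ u ∈ Icc (0:ℝ) 1, ∀ us : Fin m → ℝ,
      (∀ i, us i ∈ Icc (0:ℝ) 1 ∧ |u - us i| ≤ ε) → ∀ x, V x ≤ R →
      ∀ s : Set E, ENNReal.ofReal η * ν s ≤ seqStep Q (List.ofFn us) x s)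
    -- convention Q_u = Q_0 for u < 0, and the triangular array of Markov chains
    (hQ0 : ∀ u ≤ (0:ℝ), Q u = Q 0)
    (πn : ℕ → ℤ → Measure E)
    (hπnprob : ∀ n k, IsProbabilityMeasure (πn n k))
    (hstart : ∀ n : ℕ, ∀ k ≤ (0:ℤ), πn n k = πn n 0)
    (hrec : ∀ (n : ℕ) (k : ℤ), k ≤ (n:ℤ) →
      πn n k = (πn n (k-1)).bind (Q ((k:ℝ)/(n:ℝ)))) :
    ∃ δ ∈ Set.Ioo (0:ℝ) 1, ∃ γ ∈ Set.Ioo (0:ℝ) 1,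
      -- δ, γ are the constants of the Hairer–Mattingly contraction lemma:
      -- Δ_{V_δ}(Q_{u₁}⋯Q_{u_m}) ≤ γ whenever |u_i − u| ≤ ε, where V_δ = 1 − δ + δV
      (∀ u ∈ Icc (0:ℝ) 1, ∀ us : Fin m → ℝ,
        (∀ i, us i ∈ Icc (0:ℝ) 1 ∧ |u - us i| ≤ ε) →
        ∀ μ₁ μ₂ : Measure E, IsProbabilityMeasure μ₁ → IsProbabilityMeasure μ₂ →
          (∫⁻ x, ENNReal.ofReal (1 - δ + δ * V x) ∂μ₁) < ∞ →
          (∫⁻ x, ENNReal.ofReal (1 - δ + δ * V x) ∂μ₂) < ∞ →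
          vDist (fun x => 1 - δ + δ * V x)
              (μ₁.bind (seqStep Q (List.ofFn us))) (μ₂.bind (seqStep Q (List.ofFn us)))
            ≤ γ * vDist (fun x => 1 - δ + δ * V x) μ₁ μ₂) ∧
      -- the bound on β^{(V)}_n(j) for n ≥ m/ε and j = mg + s
      (∀ n : ℕ, (m:ℝ)/ε ≤ (n:ℝ) →
        ∀ M : ℝ, (∀ k : ℤ, k ≤ (n:ℤ) →
            (∫⁻ x, ENNReal.ofReal (V x) ∂(πn n k)) ≤ ENNReal.ofReal M) →
        ∀ (j g s : ℕ), j = m * g + s → s < m →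
          betaV V Q πn n j ≤ 2 * δ⁻¹ * M * K ^ s * γ ^ g) :=
  statement18_general Q hQmeas hQprob V hVmeas hV1 ε lam b K m hε hlam hb hK hdrift1 hdriftm η R hη
    hR ν hν hminor hQ0 πn hπnprob hrec
end
end
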